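/- arXiv:2508.04938 — 10 statements merged into one kernel-verified Lean document; each statement's English description precedes it below -/
import Mathlib

section
/- Assume in addition that ∏_{i=1}^ℓ α_i = ∏_{i=1}^ℓ β_i. Then Φ(z) converges, as z → 0 (with z ≠ 0, z ≠ 1), to a 2×2 complex matrix M whose lower-left entry is 0 and whose two diagonal entries both equal (−1)^ℓ. -/
open Matrix Filter Complex

/-- The odd transition matrix `φ_{2i-1}(z) = [[1, α⁻¹z⁻¹],[α, 1]]`. -/
noncomputable def phiOdd (a z : ℂ) : Matrix (Fin 2) (Fin 2) ℂ :=
  !![1, a⁻¹ * z⁻¹; a, 1]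

/-- The even transition matrix `φ_{2i}(z) = (1 - z⁻¹)⁻¹ • [[1, β⁻¹z⁻¹],[β, 1]]`. -/
noncomputable def phiEven (b z : ℂ) : Matrix (Fin 2) (Fin 2) ℂ :=
  (1 - z⁻¹)⁻¹ • !![1, b⁻¹ * z⁻¹; b, 1]

/-- The ordered product `Φ(z) = φ₁(z) φ₂(z) ⋯ φ_{2ℓ}(z)`, with the weights
`α_i, β_i` (for `i = 1, …, ℓ`) of the (2×ℓ)-periodic Aztec diamond. -/
noncomputable def Phi (ℓ : ℕ) (α β : ℕ → ℝ) (z : ℂ) : Matrix (Fin 2) (Fin 2) ℂ :=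
  ((List.range ℓ).map (fun i => phiOdd (α (i + 1)) z * phiEven (β (i + 1)) z)).prod

open Topology

/- For `z ≠ 0` the factor `(1 - z⁻¹)⁻¹ = z / (z - 1)` clears the pole of the odd matrix, so each
pair `φ_{2i-1}(z) φ_{2i}(z)` is a matrix function continuous at `z = 0`, where it is upper
triangular with diagonal entries `-βᵢ/αᵢ` and `-αᵢ/βᵢ`. Hence `Φ(z)` tends to a product of upper
triangular matrices, whose diagonal entries are `(-1)^ℓ (∏ βᵢ / ∏ αᵢ)^{±1} = (-1)^ℓ`. -/

namespace Matrix

variable {m R : Type*} [LinearOrder m] [Fintype m] [Semiring R]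

theorem IsUpperTriangular.mul_apply_self {M N : Matrix m m R} (hM : M.IsUpperTriangular)
    (hN : N.IsUpperTriangular) (i : m) : (M * N) i i = M i i * N i i := by
  rw [mul_apply, Finset.sum_eq_single i]
  · intro k _ hki
    rcases lt_or_gt_of_ne hki with hlt | hgt
    · rw [hM hlt, zero_mul]
    · rw [hN hgt, mul_zero]
  · simp

theorem isUpperTriangular_list_prod [DecidableEq m] {l : List (Matrix m m R)}
    (h : ∀ A ∈ l, A.IsUpperTriangular) : l.prod.IsUpperTriangular :=
  list_prod_mem (S := blockTriangularSubsemiring R id) h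

theorem list_prod_apply_self_of_isUpperTriangular [DecidableEq m] {l : List (Matrix m m R)}
    (h : ∀ A ∈ l, A.IsUpperTriangular) (i : m) : l.prod i i = (l.map fun A => A i i).prod := by
  induction l with
  | nil => simp
  | cons A l ih =>
    have hl : ∀ B ∈ l, B.IsUpperTriangular := fun B hB => h B (List.mem_cons_of_mem A hB)
    rw [List.prod_cons, IsUpperTriangular.mul_apply_self (h A List.mem_cons_self)
      (isUpperTriangular_list_prod hl), ih hl, List.map_cons, List.prod_cons]

end Matrix

theorem List.prod_map_range {M : Type*} [CommMonoid M] (f : ℕ → M) (n : ℕ) :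
    ((List.range n).map f).prod = ∏ i ∈ Finset.range n, f i := by
  rw [Finset.prod_eq_multiset_prod, Finset.range_val, Multiset.range, Multiset.map_coe,
    Multiset.prod_coe]

theorem Finset.prod_neg_inv_mul_eq_neg_one_pow {ι K : Type*} [Field K] (s : Finset ι)
    {a b : ι → K} (hab : ∏ i ∈ s, a i = ∏ i ∈ s, b i) (ha : ∏ i ∈ s, a i ≠ 0) :
    ∏ i ∈ s, -((a i)⁻¹ * b i) = (-1) ^ s.card := by
  rw [Finset.prod_neg, Finset.prod_mul_distrib, Finset.prod_inv_distrib, ← hab,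
    inv_mul_cancel₀ ha, mul_one]

noncomputable def phiPairLimit (a b : ℂ) : Matrix (Fin 2) (Fin 2) ℂ :=
  -!![a⁻¹ * b, a⁻¹ + b⁻¹; 0, b⁻¹ * a]

theorem phiPairLimit_isUpperTriangular (a b : ℂ) : (phiPairLimit a b).IsUpperTriangular := by
  intro i j hij
  fin_cases i <;> fin_cases j <;> simp_all [phiPairLimit]

theorem phiOdd_mul_phiEven {z : ℂ} (a b : ℂ) (hz : z ≠ 0) :
    phiOdd a z * phiEven b z =
      (z - 1)⁻¹ • !![z + a⁻¹ * b, a⁻¹ + b⁻¹; (a + b) * z, z + b⁻¹ * a] := by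
  have hscalar : (1 - z⁻¹)⁻¹ = (z - 1)⁻¹ * z := by
    rw [show 1 - z⁻¹ = (z - 1) * z⁻¹ by field_simp, mul_inv, inv_inv]
  ext i j
  fin_cases i <;> fin_cases j <;>
    simp [phiOdd, phiEven, mul_apply, hscalar] <;> field_simp <;> ring

theorem tendsto_phiOdd_mul_phiEven (a b : ℂ) :
    Tendsto (fun z => phiOdd a z * phiEven b z) (𝓝[≠] 0) (𝓝 (phiPairLimit a b)) := by
  set g : ℂ → Matrix (Fin 2) (Fin 2) ℂ :=
    fun z => (z - 1)⁻¹ • !![z + a⁻¹ * b, a⁻¹ + b⁻¹; (a + b) * z, z + b⁻¹ * a]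
  have hg : ContinuousAt g 0 := by
    refine ContinuousAt.smul (f := fun z : ℂ => (z - 1)⁻¹) ?_
      (continuous_matrix fun i j => ?_).continuousAt
    · exact (continuousAt_id.sub continuousAt_const).inv₀ (by norm_num)
    · fin_cases i <;> fin_cases j <;> simp <;> fun_prop
  have hg0 : g 0 = phiPairLimit a b := by
    ext i j
    fin_cases i <;> fin_cases j <;> simp [g, phiPairLimit]
  refine (hg0 ▸ hg.tendsto.mono_left nhdsWithin_le_nhds).congr' ?_
  filter_upwards [self_mem_nhdsWithin] with z hz using (phiOdd_mul_phiEven a b hz).symm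

theorem tendsto_Phi (ℓ : ℕ) (α β : ℕ → ℝ) :
    Tendsto (Phi ℓ α β) (𝓝[≠] 0)
      (𝓝 ((List.range ℓ).map fun i => phiPairLimit (α (i + 1)) (β (i + 1))).prod) :=
  tendsto_list_prod _ fun _ _ => tendsto_phiOdd_mul_phiEven _ _

theorem stmt2_general (ℓ : ℕ) (α β : ℕ → ℝ)
    (hα : ∀ i, 0 < α i)
    (hprod : ∏ i ∈ Finset.range ℓ, α (i + 1) = ∏ i ∈ Finset.range ℓ, β (i + 1)) :
    ∃ M : Matrix (Fin 2) (Fin 2) ℂ,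
      Tendsto (Phi ℓ α β) (nhdsWithin 0 {z : ℂ | z ≠ 0 ∧ z ≠ 1}) (nhds M) ∧
      M 1 0 = 0 ∧ M 0 0 = (-1 : ℂ) ^ ℓ ∧ M 1 1 = (-1 : ℂ) ^ ℓ := by
  set limits := (List.range ℓ).map fun i => phiPairLimit (α (i + 1)) (β (i + 1))
  have hupper : ∀ A ∈ limits, A.IsUpperTriangular :=
    List.forall_mem_map.2 fun _ _ => phiPairLimit_isUpperTriangular _ _
  have hprodC : ∏ i ∈ Finset.range ℓ, (α (i + 1) : ℂ) = ∏ i ∈ Finset.range ℓ, (β (i + 1) : ℂ) := by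
    exact_mod_cast hprod
  have hne : ∏ i ∈ Finset.range ℓ, (α (i + 1) : ℂ) ≠ 0 :=
    Finset.prod_ne_zero_iff.2 fun _ _ => ofReal_ne_zero.2 (hα _).ne'
  refine ⟨limits.prod, (tendsto_Phi ℓ α β).mono_left (nhdsWithin_mono _ fun z hz => hz.1),
    isUpperTriangular_list_prod hupper (by decide), ?_, ?_⟩
  · rw [list_prod_apply_self_of_isUpperTriangular hupper, List.map_map, List.prod_map_range]
    simpa [phiPairLimit] using Finset.prod_neg_inv_mul_eq_neg_one_pow _ hprodC hne
  · rw [list_prod_apply_self_of_isUpperTriangular hupper, List.map_map, List.prod_map_range]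
    simpa [phiPairLimit] using Finset.prod_neg_inv_mul_eq_neg_one_pow _ hprodC.symm (hprodC ▸ hne)

/-- If `∏ α_i = ∏ β_i`, then `Φ(z)` converges, as `z → 0` (with `z ≠ 0, 1`), to a
matrix with vanishing lower-left entry and both diagonal entries equal to `(-1)^ℓ`. -/
theorem stmt2 (ℓ : ℕ) (hℓ : 1 ≤ ℓ) (α β : ℕ → ℝ)
    (hα : ∀ i, 0 < α i) (hβ : ∀ i, 0 < β i)
    (hprod : ∏ i ∈ Finset.range ℓ, α (i + 1) = ∏ i ∈ Finset.range ℓ, β (i + 1)) :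
    ∃ M : Matrix (Fin 2) (Fin 2) ℂ,
      Tendsto (Phi ℓ α β) (nhdsWithin 0 {z : ℂ | z ≠ 0 ∧ z ≠ 1}) (nhds M) ∧
      M 1 0 = 0 ∧ M 0 0 = (-1 : ℂ) ^ ℓ ∧ M 1 1 = (-1 : ℂ) ^ ℓ :=
  stmt2_general ℓ α β hα hprod
end

section
/- As z → 1 (with z ≠ 0, z ≠ 1), the matrix (1 − z⁻¹)^ℓ · Φ(z) converges to d₀ · [[1, β_ℓ⁻¹],[α₁, α₁·β_ℓ⁻¹]], where d₀ = ∏_{m=1}^{ℓ}(1 + α_m⁻¹β_m) · ∏_{m=1}^{ℓ−1}(1 + α_{m+1}·β_m⁻¹). Equivalently, the limit is d₀ times the rank-one matrix (1, α₁)ᵀ · (1, β_ℓ⁻¹). -/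
open Matrix Filter Complex

noncomputable def Mmat (b z : ℂ) : Matrix (Fin 2) (Fin 2) ℂ :=
  !![1, b⁻¹ * z⁻¹; b, 1]

lemma smul_phiEven {z : ℂ} (h : (1 : ℂ) - z⁻¹ ≠ 0) (b : ℂ) :
    (1 - z⁻¹) • phiEven b z = Mmat b z := by
  simp only [phiEven, Mmat, smul_smul, mul_inv_cancel₀ h, one_smul]

lemma key_prod (ℓ : ℕ) (α β : ℕ → ℝ) {z : ℂ} (h : (1 : ℂ) - z⁻¹ ≠ 0) :
    (1 - z⁻¹) ^ ℓ • Phi ℓ α β z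
      = ((List.range ℓ).map (fun i => phiOdd (α (i + 1)) z * Mmat (β (i + 1)) z)).prod := by
  induction ℓ with
  | zero => simp [Phi]
  | succ n ih =>
    have h1 : Phi (n+1) α β z = Phi n α β z *
        (phiOdd (α (n+1)) z * phiEven (β (n+1)) z) := by
      simp [Phi, List.range_succ]
    rw [h1, List.range_succ, List.map_append, List.prod_append, ← ih]
    simp only [List.map_cons, List.map_nil, List.prod_cons, List.prod_nil, mul_one,
      ← smul_phiEven h ((β (n+1) : ℝ) : ℂ)]
    rw [pow_succ, mul_comm, mul_smul, smul_mul_assoc, Matrix.mul_smul,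
      Matrix.mul_smul]
    exact smul_comm _ _ _

lemma base_mat (p q : ℂ) (hp : p ≠ 0) (hq : q ≠ 0) :
    phiOdd p 1 * Mmat q 1 = (1 + p⁻¹ * q) • !![1, q⁻¹; p, p * q⁻¹] := by
  ext i j
  fin_cases i <;> fin_cases j <;>
    simp [phiOdd, Mmat, Matrix.mul_apply, Fin.sum_univ_two]
  all_goals try field_simp
  all_goals try ring
  all_goals exact Or.inl trivial

lemma step_mat (C x a1 p q : ℂ) (hx : x ≠ 0) (hp : p ≠ 0) (hq : q ≠ 0) :
    (C • !![1, x⁻¹; a1, a1 * x⁻¹]) * (phiOdd p 1 * Mmat q 1)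
      = (C * ((1 + p⁻¹ * q) * (1 + p * x⁻¹))) • !![1, q⁻¹; a1, a1 * q⁻¹] := by
  rw [base_mat p q hp hq]
  ext i j
  fin_cases i <;> fin_cases j <;>
    simp [phiOdd, Mmat, Matrix.mul_apply, Fin.sum_univ_two, Matrix.smul_apply]
  all_goals try field_simp
  all_goals ring

lemma alg_prod (a b : ℕ → ℂ) (ha : ∀ i, a i ≠ 0) (hb : ∀ i, b i ≠ 0) :
    ∀ ℓ : ℕ, 1 ≤ ℓ →
    ((List.range ℓ).map (fun i => phiOdd (a (i + 1)) 1 * Mmat (b (i + 1)) 1)).prod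
      = ((∏ m ∈ Finset.range ℓ, (1 + (a (m + 1))⁻¹ * b (m + 1))) *
          ∏ m ∈ Finset.range (ℓ - 1), (1 + a (m + 2) * (b (m + 1))⁻¹)) •
        !![1, (b ℓ)⁻¹; a 1, a 1 * (b ℓ)⁻¹] := by
  intro ℓ
  induction ℓ with
  | zero => omega
  | succ n ih =>
    intro _
    rcases Nat.eq_zero_or_pos n with hn | hn
    · subst hn
      simp only [List.range_succ, List.range_zero, List.nil_append, List.map_cons,
        List.map_nil, List.prod_cons, List.prod_nil, mul_one, Finset.range_one,
        Finset.range_zero, Finset.prod_empty, Finset.prod_singleton, Nat.zero_add,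
        Nat.add_sub_cancel]
      rw [base_mat (a 1) (b 1) (ha 1) (hb 1)]
      norm_num
    · obtain ⟨k, rfl⟩ : ∃ k, n = k + 1 := ⟨n - 1, by omega⟩
      rw [List.range_succ, List.map_append, List.prod_append, ih (by omega)]
      simp only [List.map_cons, List.map_nil, List.prod_cons, List.prod_nil, mul_one,
        Nat.add_sub_cancel]
      rw [step_mat _ _ _ _ _ (hb (k + 1)) (ha (k + 2)) (hb (k + 2)),
        Finset.prod_range_succ (fun m => 1 + (a (m + 1))⁻¹ * b (m + 1)) (k + 1),
        Finset.prod_range_succ (fun m => 1 + a (m + 2) * (b (m + 1))⁻¹) k]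
      congr 1
      ring

lemma phiOdd_cont (a : ℂ) : ContinuousAt (fun z : ℂ => phiOdd a z) 1 := by
  have h : (fun z : ℂ => phiOdd a z)
      = fun z : ℂ => !![1, 0; a, 1] + z⁻¹ • !![0, a⁻¹; 0, 0] := by
    funext z
    ext i j
    fin_cases i <;> fin_cases j <;> simp [phiOdd, mul_comm]
  rw [h]
  exact continuousAt_const.add ((continuousAt_inv₀ one_ne_zero).smul continuousAt_const)

lemma Mmat_cont (b : ℂ) : ContinuousAt (fun z : ℂ => Mmat b z) 1 := by
  have h : (fun z : ℂ => Mmat b z)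
      = fun z : ℂ => !![1, 0; b, 1] + z⁻¹ • !![0, b⁻¹; 0, 0] := by
    funext z
    ext i j
    fin_cases i <;> fin_cases j <;> simp [Mmat, mul_comm]
  rw [h]
  exact continuousAt_const.add ((continuousAt_inv₀ one_ne_zero).smul continuousAt_const)

lemma prod_cont (α β : ℕ → ℝ) (ℓ : ℕ) :
    ContinuousAt (fun z : ℂ =>
      ((List.range ℓ).map (fun i => phiOdd (α (i + 1)) z * Mmat (β (i + 1)) z)).prod) 1 := by
  induction ℓ with
  | zero => simpa using continuousAt_const
  | succ n ih =>
    have h : (fun z : ℂ =>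
        ((List.range (n + 1)).map (fun i => phiOdd (α (i + 1)) z * Mmat (β (i + 1)) z)).prod)
        = fun z : ℂ =>
          ((List.range n).map (fun i => phiOdd (α (i + 1)) z * Mmat (β (i + 1)) z)).prod *
            (phiOdd (α (n + 1)) z * Mmat (β (n + 1)) z) := by
      funext z
      simp [List.range_succ]
    rw [h]
    exact ih.mul ((phiOdd_cont _).mul (Mmat_cont _))


/-- As z → 1 (z ≠ 0, 1), the matrix (1 - z⁻¹)^ℓ • Φ(z) converges to
d₀ • [[1, β_ℓ⁻¹],[α₁, α₁β_ℓ⁻¹]], where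
d₀ = ∏_{m=1}^{ℓ}(1 + α_m⁻¹β_m) · ∏_{m=1}^{ℓ-1}(1 + α_{m+1}β_m⁻¹). -/
theorem stmt4 (ℓ : ℕ) (hℓ : 1 ≤ ℓ) (α β : ℕ → ℝ)
    (hα : ∀ i, 0 < α i) (hβ : ∀ i, 0 < β i) :
    Tendsto (fun z : ℂ => (1 - z⁻¹) ^ ℓ • Phi ℓ α β z)
      (nhdsWithin 1 {z : ℂ | z ≠ 0 ∧ z ≠ 1})
      (nhds
        ((((∏ m ∈ Finset.range ℓ, (1 + (α (m + 1))⁻¹ * β (m + 1))) *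
            ∏ m ∈ Finset.range (ℓ - 1), (1 + α (m + 2) * (β (m + 1))⁻¹) : ℝ) : ℂ) •
          !![1, ((β ℓ : ℂ))⁻¹; (α 1 : ℂ), (α 1 : ℂ) * ((β ℓ : ℂ))⁻¹])) := by
  have hS : (fun z : ℂ => (1 - z⁻¹) ^ ℓ • Phi ℓ α β z) =ᶠ[nhdsWithin 1 {z : ℂ | z ≠ 0 ∧ z ≠ 1}]
      (fun z : ℂ =>
        ((List.range ℓ).map (fun i => phiOdd (α (i + 1)) z * Mmat (β (i + 1)) z)).prod) := by
    filter_upwards [self_mem_nhdsWithin] with z hz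
    exact key_prod ℓ α β (sub_ne_zero.mpr fun h => hz.2 (inv_eq_one.mp h.symm))
  rw [tendsto_congr' hS]
  have hval : ((List.range ℓ).map (fun i => phiOdd (α (i + 1)) 1 * Mmat (β (i + 1)) 1)).prod
      = ((((∏ m ∈ Finset.range ℓ, (1 + (α (m + 1))⁻¹ * β (m + 1))) *
            ∏ m ∈ Finset.range (ℓ - 1), (1 + α (m + 2) * (β (m + 1))⁻¹) : ℝ) : ℂ) •
          !![1, ((β ℓ : ℂ))⁻¹; (α 1 : ℂ), (α 1 : ℂ) * ((β ℓ : ℂ))⁻¹]) := by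
    rw [alg_prod (fun i => ((α i : ℝ) : ℂ)) (fun i => ((β i : ℝ) : ℂ))
      (fun i => Complex.ofReal_ne_zero.mpr (hα i).ne')
      (fun i => Complex.ofReal_ne_zero.mpr (hβ i).ne') ℓ hℓ]
    congr 1
    push_cast
    ring
  rw [← hval]
  exact (prod_cont α β ℓ).tendsto.mono_left nhdsWithin_le_nhds
end

section
/- As z → 1 (with z ≠ 0, z ≠ 1), the scalar (1 − z⁻¹)^ℓ · trace(Φ(z)) converges to d = ∏_{m=1}^{ℓ}(1 + β_{m−1}⁻¹·α_m)(1 + α_m⁻¹·β_m), where by convention β₀ = β_ℓ. -/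
open Matrix Filter Complex

/-!
Multiplying by `(1 - z⁻¹)^ℓ` removes the scalar factors of the even matrices, so the scalar is the
trace of a product of matrices `[[1, b⁻¹w], [b, 1]]` evaluated at `w = z⁻¹`; this product is
continuous in `w`, so the limit is its trace at `w = 1`. There every factor is the rank-one matrix
`(1, b)ᵀ (1, b⁻¹)`, and the trace of a product of rank-one matrices `uᵢ vᵢᵀ` is the cyclic product
of the pairings `vᵢ ⬝ uᵢ₊₁`, which here are `1 + bᵢ⁻¹ bᵢ₊₁` for consecutive weights in the sequence
`α₁, β₁, …, α_ℓ, β_ℓ`.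
-/

theorem list_prod_range_vecMulVec {R m : Type*} [CommSemiring R] [Fintype m] [DecidableEq m]
    (u v : ℕ → m → R) (n : ℕ) :
    ((List.range (n + 1)).map fun i => vecMulVec (u i) (v i)).prod =
      (∏ k ∈ Finset.range n, v k ⬝ᵥ u (k + 1)) • vecMulVec (u 0) (v n) := by
  induction n with
  | zero => simp
  | succ n ih =>
    rw [List.range_succ, List.map_append, List.prod_append, ih, List.map_singleton,
      List.prod_singleton, smul_mul_assoc, vecMulVec_mul_vecMulVec, vecMulVec_smul, smul_smul,
      Finset.prod_range_succ]

theorem trace_list_prod_range_vecMulVec {R m : Type*} [CommSemiring R] [Fintype m] [DecidableEq m]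
    (u v : ℕ → m → R) (n : ℕ) :
    trace ((List.range (n + 1)).map fun i => vecMulVec (u i) (v i)).prod =
      (∏ k ∈ Finset.range n, v k ⬝ᵥ u (k + 1)) * (v n ⬝ᵥ u 0) := by
  rw [list_prod_range_vecMulVec, trace_smul, trace_vecMulVec, dotProduct_comm, smul_eq_mul]

noncomputable def weightMatrix (b w : ℂ) : Matrix (Fin 2) (Fin 2) ℂ :=
  !![1, b⁻¹ * w; b, 1]

noncomputable def weightProduct (ℓ : ℕ) (a b : ℕ → ℂ) (w : ℂ) : Matrix (Fin 2) (Fin 2) ℂ :=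
  ((List.range ℓ).map fun i => weightMatrix (a (i + 1)) w * weightMatrix (b (i + 1)) w).prod

theorem continuous_weightMatrix (b : ℂ) : Continuous (weightMatrix b) := by
  unfold weightMatrix
  fun_prop

theorem continuous_weightProduct (ℓ : ℕ) (a b : ℕ → ℂ) : Continuous (weightProduct ℓ a b) :=
  continuous_list_prod _ fun _ _ =>
    (continuous_weightMatrix _).mul (continuous_weightMatrix _)

theorem pow_smul_Phi_eq_weightProduct (ℓ : ℕ) (α β : ℕ → ℝ) {z : ℂ} (hz : z ≠ 1) :
    (1 - z⁻¹) ^ ℓ • Phi ℓ α β z = weightProduct ℓ (fun i => α i) (fun i => β i) z⁻¹ := by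
  have hc : (1 : ℂ) - z⁻¹ ≠ 0 := sub_ne_zero.2 fun h => hz (inv_eq_one.1 h.symm)
  have h := List.smul_prod ((List.range ℓ).map fun i =>
    phiOdd (α (i + 1)) z * phiEven (β (i + 1)) z) (1 - z⁻¹)
  rw [List.length_map, List.length_range] at h
  rw [Phi, h, List.map_map]
  refine congrArg List.prod (List.map_congr_left fun _ _ => ?_)
  simp only [Function.comp_apply, phiEven, mul_smul_comm, smul_smul, mul_inv_cancel₀ hc, one_smul]
  rfl

theorem weightMatrix_one {b : ℂ} (hb : b ≠ 0) :
    weightMatrix b 1 = vecMulVec ![1, b] ![1, b⁻¹] := by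
  ext i j
  fin_cases i <;> fin_cases j <;> simp [weightMatrix, vecMulVec, hb]

theorem weightMatrix_one_mul_weightMatrix_one {a b : ℂ} (ha : a ≠ 0) (hb : b ≠ 0) :
    weightMatrix a 1 * weightMatrix b 1 = vecMulVec ![1, a] ((1 + a⁻¹ * b) • ![1, b⁻¹]) := by
  rw [weightMatrix_one ha, weightMatrix_one hb, vecMulVec_mul_vecMulVec]
  simp [dotProduct, Fin.sum_univ_two]

theorem trace_weightProduct_one {a b : ℕ → ℂ} (ha : ∀ i, a i ≠ 0) (hb : ∀ i, b i ≠ 0) (n : ℕ) :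
    trace (weightProduct (n + 1) a b 1) =
      ∏ k ∈ Finset.range (n + 1),
        (1 + (b (if k = 0 then n + 1 else k))⁻¹ * a (k + 1)) * (1 + (a (k + 1))⁻¹ * b (k + 1)) := by
  rw [weightProduct, List.map_congr_left fun i _ =>
    weightMatrix_one_mul_weightMatrix_one (ha (i + 1)) (hb (i + 1)),
    trace_list_prod_range_vecMulVec]
  simp only [smul_dotProduct, cons_dotProduct_cons, dotProduct_of_isEmpty, smul_eq_mul, mul_one,
    add_zero]
  rw [Finset.prod_mul_distrib, Finset.prod_mul_distrib,
    Finset.prod_range_succ' (fun k => 1 + (b (if k = 0 then n + 1 else k))⁻¹ * a (k + 1)),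
    Finset.prod_range_succ (fun k => 1 + (a (k + 1))⁻¹ * b (k + 1))]
  simp only [if_pos, Nat.succ_ne_zero, if_false]
  ring

/-- As z → 1 (z ≠ 0, 1), the scalar (1 - z⁻¹)^ℓ · trace Φ(z) converges to
d = ∏_{m=1}^{ℓ}(1 + β_{m-1}⁻¹α_m)(1 + α_m⁻¹β_m), with the convention β₀ = β_ℓ. -/
theorem stmt5 (ℓ : ℕ) (hℓ : 1 ≤ ℓ) (α β : ℕ → ℝ)
    (hα : ∀ i, 0 < α i) (hβ : ∀ i, 0 < β i) :
    Tendsto (fun z : ℂ => (1 - z⁻¹) ^ ℓ * Matrix.trace (Phi ℓ α β z))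
      (nhdsWithin 1 {z : ℂ | z ≠ 0 ∧ z ≠ 1})
      (nhds ((∏ k ∈ Finset.range ℓ,
          ((1 + (β (if k = 0 then ℓ else k))⁻¹ * α (k + 1)) *
            (1 + (α (k + 1))⁻¹ * β (k + 1))) : ℝ) : ℂ)) := by
  obtain ⟨n, rfl⟩ := Nat.exists_eq_add_of_le' hℓ
  have hα0 (i : ℕ) : (α i : ℂ) ≠ 0 := ofReal_ne_zero.2 (hα i).ne'
  have hβ0 (i : ℕ) : (β i : ℂ) ≠ 0 := ofReal_ne_zero.2 (hβ i).ne'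
  have hinv : Tendsto (fun z : ℂ => z⁻¹) (nhdsWithin 1 {z : ℂ | z ≠ 0 ∧ z ≠ 1}) (nhds 1) := by
    simpa using (tendsto_inv₀ (one_ne_zero (α := ℂ))).mono_left nhdsWithin_le_nhds
  have hlim := ((continuous_weightProduct (n + 1) (fun i => α i) (fun i => β i)).matrix_trace
    |>.tendsto 1).comp hinv
  rw [trace_weightProduct_one hα0 hβ0] at hlim
  push_cast
  refine hlim.congr' (eventually_nhdsWithin_of_forall fun z hz => ?_)
  rw [Function.comp_apply, ← pow_smul_Phi_eq_weightProduct _ _ _ hz.2, trace_smul, smul_eq_mul]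
end

section
/- Let z ∈ ℂ with z ∉ ℝ. Suppose u = (u₁, u₂) ∈ ℂ² is a nonzero vector with Φ(z)·u = w·u and v = (v₁, v₂) ∈ ℂ² is a nonzero vector with vᵀ·Φ(z) = w·vᵀ (i.e., u is a right eigenvector and v a left eigenvector of Φ(z), both associated with the same eigenvalue w ∈ ℂ). Then Im(u₁ · conj(u₂)) · Im(v₁ · conj(v₂) / z) > 0. -/
open Matrix Filter Complex

/-!
For `t ∈ ℂ` let `q_t(x) = Im (t̄ x₀ x̄₁)` on `ℂ²`. A direct computation gives, for
`φ(b) = [[1, b⁻¹z⁻¹], [b, 1]]`,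
`q_t(φ(b) x) = q_{t - t̄/z}(x) - b Im t |x₀|² - b⁻¹ Im (t/z̄) |x₁|²`,
and the cone `{t | Im t · Im z ≥ 0, Im (t/z̄) · Im z ≥ 0}` contains `1` and is stable under
`t ↦ t - t̄/z`. So for a product `M` of `n ≥ 2` factors `φ(b)` with `b > 0` (and `Φ(z)` is a
scalar multiple of such a product) we get `q_1(M x) Im z < q_{tₙ}(x) Im z` for `x ≠ 0`, where
`tₙ` is the `n`-th iterate of `1` under that map.

For an eigenvector `M x = μ x` this reads `|μ|² q_1(x) Im z < q_{tₙ}(x) Im z`. The reversed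
product `M'` satisfies `M' E M = (1 - z⁻¹)ⁿ E` with `E = diag(1, -1)`, and `q_t(E x) = -q_t(x)`,
so applying the same inequality to `M'` and its eigenvector `E x` bounds `q_{tₙ}(x) Im z` from
the other side; the two bounds force `q_1(x) Im z` to have the sign of `|1 - z⁻¹|²ⁿ - |μ|⁴`.
A left eigenvector `v` of `M` gives the eigenvector `diag(1, z) v`, for the same eigenvalue, of
the reversed product with weights `b⁻¹`, hence the same sign for `Im (v₀ v̄₁ / z) Im z`.
-/

open ComplexConjugate

namespace AztecDiamond

noncomputable def transferProd (z : ℂ) (L : List ℝ) : Matrix (Fin 2) (Fin 2) ℂ :=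
  (L.map fun b => phiOdd b z).prod

noncomputable def imForm (t : ℂ) (x : Fin 2 → ℂ) : ℝ :=
  (conj t * (x 0 * conj (x 1))).im

noncomputable def shift (z t : ℂ) : ℂ := t - conj t / z

def InCone (z t : ℂ) : Prop := 0 ≤ t.im * z.im ∧ 0 ≤ (t / conj z).im * z.im

lemma im_shift (z t : ℂ) : (shift z t).im = t.im + (t / conj z).im := by
  have h : conj t / z = conj (t / conj z) := by simp
  rw [shift, sub_im, h, conj_im]
  ring

lemma im_shift_div_conj {z : ℂ} (hz : z ≠ 0) (t : ℂ) :
    (shift z t / conj z).im = (t / conj z).im + t.im / normSq z := by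
  have hzc : conj z ≠ 0 := by simpa using hz
  apply Complex.ofReal_injective
  push_cast [im_eq_sub_conj]
  simp only [shift, map_div₀, map_sub, conj_conj]
  rw [normSq_eq_conj_mul_self]
  field_simp
  ring

lemma InCone.shift {z : ℂ} (hz : z ≠ 0) {t : ℂ} (ht : InCone z t) : InCone z (shift z t) := by
  obtain ⟨h1, h2⟩ := ht
  have h3 : 0 ≤ t.im / normSq z * z.im := by
    rw [div_mul_eq_mul_div]
    exact div_nonneg h1 (normSq_nonneg z)
  constructor
  · rw [im_shift, add_mul]
    exact add_nonneg h1 h2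
  · rw [im_shift_div_conj hz, add_mul]
    exact add_nonneg h2 h3

lemma im_one_div_conj (z : ℂ) : (1 / conj z).im = z.im / normSq z := by
  simp

lemma inCone_one (z : ℂ) : InCone z 1 := by
  refine ⟨by simp, ?_⟩
  rw [im_one_div_conj, div_mul_eq_mul_div]
  exact div_nonneg (mul_self_nonneg _) (normSq_nonneg z)

lemma im_shift_one (z : ℂ) : (shift z 1).im = z.im / normSq z := by
  rw [im_shift, im_one_div_conj, one_im, zero_add]

lemma im_shift_one_div_conj {z : ℂ} (hz : z ≠ 0) :
    (shift z 1 / conj z).im = z.im / normSq z := by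
  rw [im_shift_div_conj hz, im_one_div_conj, one_im, zero_div, add_zero]

lemma imForm_one (x : Fin 2 → ℂ) : imForm 1 x = (x 0 * conj (x 1)).im := by
  simp [imForm]

lemma imForm_smul (t c : ℂ) (x : Fin 2 → ℂ) : imForm t (c • x) = normSq c * imForm t x := by
  simp only [imForm, Pi.smul_apply, smul_eq_mul, map_mul]
  rw [show conj t * (c * x 0 * (conj c * conj (x 1)))
      = (c * conj c) * (conj t * (x 0 * conj (x 1))) by ring, mul_conj, im_ofReal_mul]

lemma imForm_diagonal_one_neg_one (t : ℂ) (x : Fin 2 → ℂ) :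
    imForm t (diagonal ![1, -1] *ᵥ x) = -imForm t x := by
  simp [imForm, mulVec_diagonal]

lemma imForm_one_diagonal_mulVec {z : ℂ} (hz : z ≠ 0) (v : Fin 2 → ℂ) :
    imForm 1 (diagonal ![1, z] *ᵥ v) = normSq z * (v 0 * conj (v 1) / z).im := by
  have hn : normSq z ≠ 0 := (normSq_pos.2 hz).ne'
  simp [imForm, mulVec_diagonal, div_im, mul_im]
  field_simp
  ring

lemma imForm_phiOdd_mulVec {b : ℝ} (hb : b ≠ 0) {z : ℂ} (hz : z ≠ 0) (t : ℂ)
    (x : Fin 2 → ℂ) :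
    imForm t (phiOdd b z *ᵥ x) = imForm (shift z t) x - b * t.im * normSq (x 0)
      - (t / conj z).im / b * normSq (x 1) := by
  have hzc : conj z ≠ 0 := by simpa using hz
  have hbc : (b : ℂ) ≠ 0 := by exact_mod_cast hb
  apply Complex.ofReal_injective
  simp only [imForm, phiOdd, shift, mulVec, dotProduct, Fin.sum_univ_two, of_apply, cons_val',
    cons_val_zero, cons_val_one, empty_val', cons_val_fin_one]
  push_cast [im_eq_sub_conj, ← mul_conj]
  simp only [map_mul, map_add, map_sub, map_div₀, map_inv₀, conj_conj, conj_ofReal, map_one]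
  field_simp
  ring

lemma imForm_phiOdd_mulVec_mul_im {b : ℝ} (hb : b ≠ 0) {z : ℂ} (hz : z ≠ 0) (t : ℂ)
    (x : Fin 2 → ℂ) :
    imForm t (phiOdd b z *ᵥ x) * z.im = imForm (shift z t) x * z.im
      - (b * (t.im * z.im) * normSq (x 0) + (t / conj z).im * z.im / b * normSq (x 1)) := by
  rw [imForm_phiOdd_mulVec hb hz]
  ring

lemma imForm_phiOdd_mulVec_le {b : ℝ} (hb : 0 < b) {z : ℂ} (hz : z ≠ 0) {t : ℂ}
    (ht : InCone z t) (x : Fin 2 → ℂ) :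
    imForm t (phiOdd b z *ᵥ x) * z.im ≤ imForm (shift z t) x * z.im := by
  rw [imForm_phiOdd_mulVec_mul_im hb.ne' hz]
  exact sub_le_self _ (add_nonneg (mul_nonneg (mul_nonneg hb.le ht.1) (normSq_nonneg _))
    (mul_nonneg (div_nonneg ht.2 hb.le) (normSq_nonneg _)))

lemma imForm_phiOdd_mulVec_lt {b : ℝ} (hb : 0 < b) {z : ℂ} (hz : z ≠ 0) {t : ℂ}
    (ht₁ : 0 < t.im * z.im) (ht₂ : 0 < (t / conj z).im * z.im) {x : Fin 2 → ℂ} (hx : x ≠ 0) :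
    imForm t (phiOdd b z *ᵥ x) * z.im < imForm (shift z t) x * z.im := by
  have hloss :
      0 < b * (t.im * z.im) * normSq (x 0) + (t / conj z).im * z.im / b * normSq (x 1) := by
    by_cases hx0 : x 0 = 0
    · have hx1 : x 1 ≠ 0 := fun hx1 => hx (funext fun i => by fin_cases i <;> assumption)
      rw [hx0, map_zero, mul_zero, zero_add]
      exact mul_pos (div_pos ht₂ hb) (normSq_pos.2 hx1)
    · exact add_pos_of_pos_of_nonneg (mul_pos (mul_pos hb ht₁) (normSq_pos.2 hx0))
        (mul_nonneg (div_pos ht₂ hb).le (normSq_nonneg _))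
  rw [imForm_phiOdd_mulVec_mul_im hb.ne' hz]
  exact sub_lt_self _ hloss

lemma transferProd_cons (z : ℂ) (b : ℝ) (L : List ℝ) :
    transferProd z (b :: L) = phiOdd b z * transferProd z L := by
  simp [transferProd]

lemma transferProd_append (z : ℂ) (L₁ L₂ : List ℝ) :
    transferProd z (L₁ ++ L₂) = transferProd z L₁ * transferProd z L₂ := by
  simp [transferProd]

lemma det_phiOdd {b : ℝ} (hb : b ≠ 0) (z : ℂ) : (phiOdd b z).det = 1 - z⁻¹ := by
  have hbc : (b : ℂ) ≠ 0 := by exact_mod_cast hb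
  rw [phiOdd, det_fin_two_of]
  field_simp

lemma det_transferProd {L : List ℝ} (hL : ∀ b ∈ L, b ≠ 0) (z : ℂ) :
    (transferProd z L).det = (1 - z⁻¹) ^ L.length := by
  induction L with
  | nil => simp [transferProd]
  | cons b L ih =>
    rw [transferProd_cons, det_mul, det_phiOdd (hL b List.mem_cons_self),
      ih (fun c hc => hL c (List.mem_cons_of_mem b hc)), List.length_cons, pow_succ']

lemma transferProd_mulVec_ne_zero {z : ℂ} (hz : z ≠ 1) {L : List ℝ} (hL : ∀ b ∈ L, b ≠ 0)
    {x : Fin 2 → ℂ} (hx : x ≠ 0) : transferProd z L *ᵥ x ≠ 0 := by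
  have hdet : (transferProd z L).det ≠ 0 := by
    rw [det_transferProd hL]
    refine pow_ne_zero _ (sub_ne_zero.2 fun h => hz ?_)
    rw [← inv_inv z, ← h, inv_one]
  simpa using (mulVec_injective_of_det_ne_zero hdet).ne hx

lemma imForm_transferProd_mulVec_le {z : ℂ} (hz : z ≠ 0) {L : List ℝ} (hL : ∀ b ∈ L, 0 < b)
    {t : ℂ} (ht : InCone z t) (x : Fin 2 → ℂ) :
    imForm t (transferProd z L *ᵥ x) * z.im ≤ imForm ((shift z)^[L.length] t) x * z.im := by
  induction L generalizing t with
  | nil => simp [transferProd]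
  | cons b L ih =>
    rw [transferProd_cons, ← mulVec_mulVec, List.length_cons, Function.iterate_succ_apply]
    calc imForm t (phiOdd b z *ᵥ (transferProd z L *ᵥ x)) * z.im
        ≤ imForm (shift z t) (transferProd z L *ᵥ x) * z.im :=
          imForm_phiOdd_mulVec_le (hL b List.mem_cons_self) hz ht _
      _ ≤ _ := ih (fun c hc => hL c (List.mem_cons_of_mem b hc)) (ht.shift hz)

/-- Starting from `t = 1`, the first factor may lose nothing, but after one `shift` the cone
condition holds strictly, so the second factor loses a positive amount. -/
lemma imForm_transferProd_mulVec_lt {z : ℂ} (hz : z.im ≠ 0) {L : List ℝ}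
    (hL : ∀ b ∈ L, 0 < b) (hlen : 2 ≤ L.length) {x : Fin 2 → ℂ} (hx : x ≠ 0) :
    imForm 1 (transferProd z L *ᵥ x) * z.im < imForm ((shift z)^[L.length] 1) x * z.im := by
  obtain ⟨b₁, b₂, L, rfl⟩ : ∃ b₁ b₂ L', L = b₁ :: b₂ :: L' := by
    match L, hlen with
    | b₁ :: b₂ :: L', _ => exact ⟨b₁, b₂, L', rfl⟩
  have hz0 : z ≠ 0 := fun h => hz (by simp [h])
  have hz1 : z ≠ 1 := fun h => hz (by simp [h])
  have hL' : ∀ b ∈ L, 0 < b := fun b hb => hL b (by simp [hb])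
  have hshift : 0 < z.im / normSq z * z.im := by
    rw [div_mul_eq_mul_div]
    exact div_pos (mul_self_pos.2 hz) (normSq_pos.2 hz0)
  have hcone : InCone z (shift z (shift z 1)) :=
    InCone.shift hz0 ⟨by rw [im_shift_one]; exact hshift.le,
      by rw [im_shift_one_div_conj hz0]; exact hshift.le⟩
  have hy : transferProd z L *ᵥ x ≠ 0 :=
    transferProd_mulVec_ne_zero hz1 (fun b hb => (hL' b hb).ne') hx
  simp only [transferProd_cons, ← mulVec_mulVec, List.length_cons, Function.iterate_succ_apply]
  calc imForm 1 (phiOdd b₁ z *ᵥ (phiOdd b₂ z *ᵥ (transferProd z L *ᵥ x))) * z.im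
      ≤ imForm (shift z 1) (phiOdd b₂ z *ᵥ (transferProd z L *ᵥ x)) * z.im :=
        imForm_phiOdd_mulVec_le (hL b₁ (by simp)) hz0 (inCone_one z) _
    _ < imForm (shift z (shift z 1)) (transferProd z L *ᵥ x) * z.im :=
        imForm_phiOdd_mulVec_lt (hL b₂ (by simp)) hz0 (by rwa [im_shift_one])
          (by rwa [im_shift_one_div_conj hz0]) hy
    _ ≤ _ := imForm_transferProd_mulVec_le hz0 hL' hcone x

lemma phiOdd_mul_diagonal_mul_phiOdd {b : ℝ} (hb : b ≠ 0) {z : ℂ} (hz : z ≠ 0) :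
    phiOdd b z * diagonal ![1, -1] * phiOdd b z = (1 - z⁻¹) • diagonal ![1, -1] := by
  have hbc : (b : ℂ) ≠ 0 := by exact_mod_cast hb
  ext i j
  fin_cases i <;> fin_cases j <;>
    simp [phiOdd, mul_apply, vecMul, dotProduct, Fin.sum_univ_two] <;> field_simp <;> ring

lemma transferProd_reverse_mul_diagonal_mul {z : ℂ} (hz : z ≠ 0) {L : List ℝ}
    (hL : ∀ b ∈ L, b ≠ 0) :
    transferProd z L.reverse * diagonal ![1, -1] * transferProd z L
      = (1 - z⁻¹) ^ L.length • diagonal ![1, -1] := by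
  induction L with
  | nil => simp [transferProd]
  | cons b L ih =>
    have hPb : transferProd z [b] = phiOdd b z := by simp [transferProd]
    calc transferProd z (b :: L).reverse * diagonal ![1, -1] * transferProd z (b :: L)
        = transferProd z L.reverse * (phiOdd b z * diagonal ![1, -1] * phiOdd b z)
            * transferProd z L := by
          simp only [List.reverse_cons, transferProd_append, hPb, transferProd_cons,
            Matrix.mul_assoc]
      _ = (1 - z⁻¹) ^ (b :: L).length • diagonal ![1, -1] := by
          rw [phiOdd_mul_diagonal_mul_phiOdd (hL b List.mem_cons_self) hz, Matrix.mul_smul,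
            Matrix.smul_mul, ih (fun c hc => hL c (List.mem_cons_of_mem b hc)), smul_smul,
            List.length_cons, pow_succ']

lemma phiOdd_inv_mul_diagonal {b : ℝ} (hb : b ≠ 0) {z : ℂ} (hz : z ≠ 0) :
    phiOdd (b⁻¹ : ℝ) z * diagonal ![1, z] = diagonal ![1, z] * (phiOdd b z)ᵀ := by
  have hbc : (b : ℂ) ≠ 0 := by exact_mod_cast hb
  ext i j
  fin_cases i <;> fin_cases j <;> simp [phiOdd, mul_apply, Fin.sum_univ_two] <;> field_simp

lemma transferProd_map_inv_reverse_mul_diagonal {z : ℂ} (hz : z ≠ 0) {L : List ℝ}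
    (hL : ∀ b ∈ L, b ≠ 0) :
    transferProd z (L.map (·⁻¹)).reverse * diagonal ![1, z]
      = diagonal ![1, z] * (transferProd z L)ᵀ := by
  induction L with
  | nil => simp [transferProd]
  | cons b L ih =>
    have hPb : transferProd z [b⁻¹] = phiOdd (b⁻¹ : ℝ) z := by simp [transferProd]
    rw [List.map_cons, List.reverse_cons, transferProd_append, hPb, Matrix.mul_assoc,
      phiOdd_inv_mul_diagonal (hL b List.mem_cons_self) hz, ← Matrix.mul_assoc,
      ih (fun c hc => hL c (List.mem_cons_of_mem b hc)), transferProd_cons, transpose_mul,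
      Matrix.mul_assoc]

lemma eigenvector_sign {z : ℂ} (hz : z.im ≠ 0) {L : List ℝ} (hL : ∀ b ∈ L, 0 < b)
    (hlen : 2 ≤ L.length) {x : Fin 2 → ℂ} (hx : x ≠ 0) {μ : ℂ}
    (hμ : transferProd z L *ᵥ x = μ • x) :
    (normSq μ ^ 2 - normSq (1 - z⁻¹) ^ L.length) * (imForm 1 x * z.im) < 0 := by
  have hz0 : z ≠ 0 := fun h => hz (by simp [h])
  have hz1 : z ≠ 1 := fun h => hz (by simp [h])
  have hL0 : ∀ b ∈ L, b ≠ 0 := fun b hb => (hL b hb).ne'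
  have hμ0 : μ ≠ 0 := by
    rintro rfl
    exact transferProd_mulVec_ne_zero hz1 hL0 hx (by rw [hμ, zero_smul])
  set E : Matrix (Fin 2) (Fin 2) ℂ := diagonal ![1, -1]
  have hEx : E *ᵥ x ≠ 0 := by
    have hEE : E *ᵥ (E *ᵥ x) = x := by
      ext i; fin_cases i <;> simp [E, mulVec_diagonal]
    exact fun h => hx (by rw [← hEE, h, mulVec_zero])
  have hrev :
      transferProd z L.reverse *ᵥ (E *ᵥ x) = ((1 - z⁻¹) ^ L.length / μ) • (E *ᵥ x) := by
    have h := congrArg (· *ᵥ x) (transferProd_reverse_mul_diagonal_mul hz0 hL0)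
    simp only [← mulVec_mulVec, hμ, mulVec_smul, smul_mulVec] at h
    rw [div_eq_inv_mul, mul_smul, ← h, smul_smul, inv_mul_cancel₀ hμ0, one_smul]
  have h₁ := imForm_transferProd_mulVec_lt hz hL hlen hx
  have h₂ := imForm_transferProd_mulVec_lt hz (L := L.reverse) (by simpa using hL)
    (by simpa using hlen) hEx
  rw [hμ, imForm_smul] at h₁
  rw [hrev, imForm_smul, imForm_diagonal_one_neg_one, imForm_diagonal_one_neg_one,
    List.length_reverse, map_div₀, map_pow] at h₂
  set S := normSq μ
  have hS : 0 < S := normSq_pos.2 hμ0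
  calc (S ^ 2 - normSq (1 - z⁻¹) ^ L.length) * (imForm 1 x * z.im)
      = S * (S * imForm 1 x * z.im - normSq (1 - z⁻¹) ^ L.length / S * imForm 1 x * z.im) := by
        field_simp
    _ < 0 := mul_neg_of_pos_of_neg hS (by linarith)

lemma left_eigenvector_sign {z : ℂ} (hz : z.im ≠ 0) {L : List ℝ} (hL : ∀ b ∈ L, 0 < b)
    (hlen : 2 ≤ L.length) {v : Fin 2 → ℂ} (hv : v ≠ 0) {μ : ℂ}
    (hμ : v ᵥ* transferProd z L = μ • v) :
    (normSq μ ^ 2 - normSq (1 - z⁻¹) ^ L.length) * ((v 0 * conj (v 1) / z).im * z.im) < 0 := by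
  have hz0 : z ≠ 0 := fun h => hz (by simp [h])
  set D : Matrix (Fin 2) (Fin 2) ℂ := diagonal ![1, z]
  have hDv : D *ᵥ v ≠ 0 := by
    refine fun h => hv (funext fun i => ?_)
    have := congrFun h i
    fin_cases i <;> simpa [D, mulVec_diagonal, hz0] using this
  have hL' : ∀ b ∈ (L.map (·⁻¹)).reverse, 0 < b := by
    simp only [List.mem_reverse, List.mem_map]
    rintro _ ⟨b, hb, rfl⟩
    exact inv_pos.2 (hL b hb)
  have heig : transferProd z (L.map (·⁻¹)).reverse *ᵥ (D *ᵥ v) = μ • (D *ᵥ v) := by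
    rw [mulVec_mulVec, transferProd_map_inv_reverse_mul_diagonal hz0 (fun b hb => (hL b hb).ne'),
      ← mulVec_mulVec, mulVec_transpose, hμ, mulVec_smul]
  have h := eigenvector_sign hz hL' (by simpa using hlen) hDv heig
  rw [List.length_reverse, List.length_map, imForm_one_diagonal_mulVec hz0,
    show ∀ A n q : ℝ, A * (n * q * z.im) = n * (A * (q * z.im)) by intros; ring] at h
  exact neg_of_mul_neg_right h (normSq_nonneg z)

lemma pos_of_mul_neg_of_mul_neg {A p q c : ℝ} (hp : A * (p * c) < 0) (hq : A * (q * c) < 0) :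
    0 < p * q := by
  have h := mul_pos_of_neg_of_neg hp hq
  rw [show A * (p * c) * (A * (q * c)) = (A * c) ^ 2 * (p * q) by ring] at h
  exact pos_of_mul_pos_right h (sq_nonneg _)

lemma phiEven_eq_smul_phiOdd (b z : ℂ) : phiEven b z = (1 - z⁻¹)⁻¹ • phiOdd b z := rfl

lemma prod_map_phiOdd_mul_phiEven (α β : ℕ → ℝ) (z : ℂ) (l : List ℕ) :
    (l.map fun i => phiOdd (α (i + 1)) z * phiEven (β (i + 1)) z).prod
      = (1 - z⁻¹)⁻¹ ^ l.length • transferProd z (l.flatMap fun i => [α (i + 1), β (i + 1)]) := by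
  induction l with
  | nil => simp [transferProd]
  | cons i l ih =>
    have hpair : transferProd z [α (i + 1), β (i + 1)]
        = phiOdd (α (i + 1)) z * phiOdd (β (i + 1)) z := by
      simp [transferProd]
    rw [List.map_cons, List.prod_cons, ih, List.flatMap_cons, transferProd_append, hpair,
      phiEven_eq_smul_phiOdd, List.length_cons, pow_succ]
    simp only [Matrix.mul_smul, Matrix.smul_mul, smul_smul, Matrix.mul_assoc]

lemma exists_Phi_eq_smul_transferProd {α β : ℕ → ℝ} (hα : ∀ i, 0 < α i) (hβ : ∀ i, 0 < β i)
    (ℓ : ℕ) (z : ℂ) :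
    ∃ L : List ℝ, Phi ℓ α β z = (1 - z⁻¹)⁻¹ ^ ℓ • transferProd z L ∧ (∀ b ∈ L, 0 < b) ∧
      L.length = 2 * ℓ := by
  refine ⟨_, by rw [Phi, prod_map_phiOdd_mul_phiEven, List.length_range], ?_, ?_⟩
  · simp only [List.mem_flatMap, List.mem_cons, List.not_mem_nil, or_false]
    rintro b ⟨i, -, rfl | rfl⟩
    exacts [hα _, hβ _]
  · simp [List.length_flatMap, mul_comm]

end AztecDiamond

/-- For z ∉ ℝ, if u is a nonzero right eigenvector and v a nonzero left eigenvector
of Φ(z) for the same eigenvalue w, then Im(u₁ conj(u₂)) · Im(v₁ conj(v₂)/z) > 0. -/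
theorem stmt7 (ℓ : ℕ) (hℓ : 1 ≤ ℓ) (α β : ℕ → ℝ)
    (hα : ∀ i, 0 < α i) (hβ : ∀ i, 0 < β i)
    (z : ℂ) (hz : z.im ≠ 0) (w : ℂ) (u v : Fin 2 → ℂ) (hu : u ≠ 0) (hv : v ≠ 0)
    (hu_eig : Phi ℓ α β z *ᵥ u = w • u)
    (hv_eig : v ᵥ* Phi ℓ α β z = w • v) :
    0 < (u 0 * (starRingEnd ℂ) (u 1)).im * ((v 0 * (starRingEnd ℂ) (v 1)) / z).im := by
  open AztecDiamond in
  obtain ⟨L, hPhi, hL, hlen⟩ := exists_Phi_eq_smul_transferProd hα hβ ℓ z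
  have hc : (1 - z⁻¹)⁻¹ ^ ℓ ≠ 0 := by
    refine pow_ne_zero _ (inv_ne_zero (sub_ne_zero.2 fun h => hz ?_))
    rw [← inv_inv z, ← h, inv_one, one_im]
  rw [hPhi, smul_mulVec, ← eq_inv_smul_iff₀ hc, smul_smul] at hu_eig
  rw [hPhi, vecMul_smul, ← eq_inv_smul_iff₀ hc, smul_smul] at hv_eig
  have hu_sign := eigenvector_sign hz hL (by omega) hu hu_eig
  have hv_sign := left_eigenvector_sign hz hL (by omega) hv hv_eig
  rw [imForm_one] at hu_sign
  exact pos_of_mul_neg_of_mul_neg hu_sign hv_sign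
end

section
/- For every z ∈ ℂ with z ≠ 1 and every u = (u₁, u₂) ∈ ℂ², one has |f(z)·u|² − |f(conj z)·conj(u)|² = −(4κ(a²+1)^{3/2} / |z−1|²) · Im(u₁ · conj(u₂)), where f(z)·u = f(z)₁u₁ + f(z)₂u₂ and conj(u) = (conj u₁, conj u₂). -/
/-!
`f(z)·u` is the scalar `c / (z - 1)` with `c = √(a+i)·(i−a)` times `iκu₁ + u₂`, and `f(z̄)·ū`
is `c / (z̄ - 1)` times `iκū₁ + ū₂`. Since `|z̄ - 1| = |z - 1|` and `|c|² = |a+i|·|i−a|² =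
(a²+1)^{3/2}`, the identity reduces to `|iκu₁ + u₂|² − |iκū₁ + ū₂|² = −4κ Im(u₁ū₂)`, which is
an expansion into real and imaginary parts.
-/

open Complex

/-- The row-vector-valued function
`f(z) = (√(a+i)·(i−a)/(z−1)) · (iκ, 1)` (principal branch of the square root). -/
noncomputable def fvec (a κ : ℝ) (z : ℂ) : Fin 2 → ℂ :=
  (((a : ℂ) + I) ^ ((1 : ℂ) / 2) * (I - (a : ℂ)) / (z - 1)) • ![I * (κ : ℂ), 1]

open ComplexConjugate

lemma sq_norm_cpow_one_half (w : ℂ) : ‖w ^ ((1 : ℂ) / 2)‖ ^ 2 = ‖w‖ := by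
  rw [show (1 : ℂ) / 2 = ((1 / 2 : ℝ) : ℂ) by push_cast; rfl, norm_cpow_real,
    ← Real.rpow_natCast, ← Real.rpow_mul (norm_nonneg w)]
  norm_num

lemma sq_norm_ofReal_add_I (a : ℝ) : ‖(a : ℂ) + I‖ ^ 2 = a ^ 2 + 1 := by
  simp only [Complex.sq_norm, normSq_apply, add_re, add_im, ofReal_re, ofReal_im, I_re, I_im]
  ring

lemma sq_norm_I_sub_ofReal (a : ℝ) : ‖I - (a : ℂ)‖ ^ 2 = a ^ 2 + 1 := by
  simp only [Complex.sq_norm, normSq_apply, sub_re, sub_im, ofReal_re, ofReal_im, I_re, I_im]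
  ring

lemma sq_norm_cpow_one_half_ofReal_add_I_mul_I_sub_ofReal (a : ℝ) :
    ‖((a : ℂ) + I) ^ ((1 : ℂ) / 2) * (I - (a : ℂ))‖ ^ 2 = (a ^ 2 + 1) ^ ((3 : ℝ) / 2) := by
  have hpos : (0 : ℝ) < a ^ 2 + 1 := by positivity
  rw [norm_mul, mul_pow, sq_norm_cpow_one_half, sq_norm_I_sub_ofReal,
    ← Real.sqrt_sq (norm_nonneg _), sq_norm_ofReal_add_I, Real.sqrt_eq_rpow,
    ← Real.rpow_add_one hpos.ne']
  norm_num

lemma fvec_zero_mul_add_fvec_one_mul (a κ : ℝ) (z u₀ u₁ : ℂ) :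
    fvec a κ z 0 * u₀ + fvec a κ z 1 * u₁
      = ((a : ℂ) + I) ^ ((1 : ℂ) / 2) * (I - (a : ℂ)) / (z - 1) * (I * κ * u₀ + u₁) := by
  simp only [fvec, Pi.smul_apply, Matrix.cons_val_zero, Matrix.cons_val_one, smul_eq_mul]
  ring

lemma sq_norm_I_mul_add_sub_sq_norm_conj (κ : ℝ) (u₀ u₁ : ℂ) :
    ‖I * κ * u₀ + u₁‖ ^ 2 - ‖I * κ * conj u₀ + conj u₁‖ ^ 2
      = -(4 * κ) * (u₀ * conj u₁).im := by
  simp only [Complex.sq_norm, normSq_apply, add_re, add_im, mul_re, mul_im, I_re, I_im,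
    ofReal_re, ofReal_im, conj_re, conj_im]
  ring

theorem stmt9_general (a κ : ℝ) (z : ℂ) (u : Fin 2 → ℂ) :
    ‖fvec a κ z 0 * u 0 + fvec a κ z 1 * u 1‖ ^ 2
      - ‖fvec a κ ((starRingEnd ℂ) z) 0 * (starRingEnd ℂ) (u 0)
          + fvec a κ ((starRingEnd ℂ) z) 1 * (starRingEnd ℂ) (u 1)‖ ^ 2
    = -(4 * κ * (a ^ 2 + 1) ^ ((3 : ℝ) / 2) / ‖z - 1‖ ^ 2)
        * (u 0 * (starRingEnd ℂ) (u 1)).im := by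
  have hconj : ‖conj z - 1‖ = ‖z - 1‖ := by
    rw [← norm_conj, map_sub, conj_conj, map_one]
  rw [fvec_zero_mul_add_fvec_one_mul, fvec_zero_mul_add_fvec_one_mul, norm_mul, norm_mul,
    mul_pow, mul_pow, norm_div, norm_div, div_pow, div_pow, hconj,
    sq_norm_cpow_one_half_ofReal_add_I_mul_I_sub_ofReal]
  linear_combination ((a ^ 2 + 1) ^ ((3 : ℝ) / 2) / ‖z - 1‖ ^ 2) *
    sq_norm_I_mul_add_sub_sq_norm_conj κ (u 0) (u 1)

/-- With `a = √(α₁/β_ℓ)` and `κ = √(α₁ β_ℓ)`, for every `z ≠ 1` and `u ∈ ℂ²`: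
`|f(z)·u|² − |f(z̄)·ū|² = −(4κ(a²+1)^{3/2}/|z−1|²)·Im(u₁ū₂)`. -/
theorem stmt9 (α₁ βℓ : ℝ) (hα : 0 < α₁) (hβ : 0 < βℓ)
    (a κ : ℝ) (ha : a = Real.sqrt (α₁ / βℓ)) (hκ : κ = Real.sqrt (α₁ * βℓ))
    (z : ℂ) (hz : z ≠ 1) (u : Fin 2 → ℂ) :
    ‖fvec a κ z 0 * u 0 + fvec a κ z 1 * u 1‖ ^ 2
      - ‖fvec a κ ((starRingEnd ℂ) z) 0 * (starRingEnd ℂ) (u 0)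
          + fvec a κ ((starRingEnd ℂ) z) 1 * (starRingEnd ℂ) (u 1)‖ ^ 2
    = -(4 * κ * (a ^ 2 + 1) ^ ((3 : ℝ) / 2) / ‖z - 1‖ ^ 2)
        * (u 0 * (starRingEnd ℂ) (u 1)).im :=
  stmt9_general a κ z u
end

section
/- Let ḡ(z) = conj(g(conj z)) = √(a+i)·(−i·a·c/z + 1). Then: (i) for every z ∈ ℂ with z ∉ {0, b, −c}, f(z)·ḡ(z) = −(a²+1)·(z² + bc)/(z(z+c)(z−b)); in particular f·ḡ is a rational function with real coefficients. (ii) Consequently, for every continuously differentiable path γ : [0,1] → ℂ∖{0, b, −c} satisfying γ(1−t) = conj(γ(t)) for all t ∈ [0,1], the number (1/(2πi)) ∫₀¹ f(γ(t))·ḡ(γ(t))·γ'(t) dt is real. -/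
/-!
Since `√(a+i)² = a+i` and `a² c = b`, clearing denominators turns `f · ḡ` into the rational
function `R(z) = -(a²+1)(z² + bc)/(z(z+c)(z-b))`, whose coefficients are real, so
`R (conj z) = conj (R z)`. For a path with `γ(1-t) = conj (γ t)` one has
`γ'(1-t) = -conj (γ' t)`, hence `F t = R(γ t) γ'(t)` satisfies `F(1-t) = -conj (F t)`.
Substituting `t ↦ 1-t` gives `∫ F = -conj (∫ F)`, so `∫ F` is purely imaginary and
`∫ F / (2πi)` is real.
-/

open Complex Real

open scoped ComplexConjugate

lemma Complex.cpow_one_div_two_mul_self (w : ℂ) :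
    w ^ ((1 : ℂ) / 2) * w ^ ((1 : ℂ) / 2) = w := by
  rw [← sq, one_div, ← Nat.cast_ofNat, cpow_nat_inv_pow w two_ne_zero]

lemma add_I_mul_partialFractions_mul {a b c z : ℂ} (habc : a ^ 2 * c = b) (hz : z ≠ 0)
    (hzc : z + c ≠ 0) (hzb : z - b ≠ 0) :
    (a + I) * ((I / (z + c) - a / (z - b)) * (-(I * a * c / z) + 1))
      = -(a ^ 2 + 1) * (z ^ 2 + b * c) / (z * (z + c) * (z - b)) := by
  field_simp
  linear_combination (I * (z + c) * (a + I)) * habc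
    + (a * c * (b - z) * (a + I) + (z ^ 2 + b * c)) * I_sq

section ConjSymmetricPath

variable {γ γ' : ℝ → ℂ}

lemma neg_conj_deriv_of_comp_one_sub_eq_conj
    (hd : ∀ t ∈ Set.Icc (0 : ℝ) 1, HasDerivAt γ (γ' t) t)
    (hsym : ∀ t ∈ Set.Icc (0 : ℝ) 1, γ (1 - t) = conj (γ t)) {t : ℝ}
    (ht : t ∈ Set.Ioo (0 : ℝ) 1) :
    γ' (1 - t) = -conj (γ' t) := by
  have hreflect : HasDerivAt (fun s => γ (1 - s)) ((-1 : ℝ) • γ' (1 - t)) t :=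
    (hd (1 - t) ⟨by linarith [ht.2], by linarith [ht.1]⟩).scomp t
      ((hasDerivAt_id t).const_sub 1)
  have heq : (fun s => γ (1 - s)) =ᶠ[nhds t] fun s => conj (γ s) := by
    filter_upwards [Ioo_mem_nhds ht.1 ht.2] with s hs
    exact hsym s ⟨hs.1.le, hs.2.le⟩
  have huniq :=
    (hreflect.congr_of_eventuallyEq heq.symm).unique (hd t ⟨ht.1.le, ht.2.le⟩).star
  rw [neg_one_smul, ← starRingEnd_apply] at huniq
  linear_combination -huniq

lemma re_intervalIntegral_eq_zero_of_comp_one_sub {F : ℝ → ℂ}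
    (hF : ∀ t ∈ Set.Ioo (0 : ℝ) 1, F (1 - t) = -conj (F t)) :
    (∫ t in (0 : ℝ)..1, F t).re = 0 := by
  have hanti : (∫ t in (0 : ℝ)..1, F t) = -conj (∫ t in (0 : ℝ)..1, F t) :=
    calc (∫ t in (0 : ℝ)..1, F t) = ∫ t in (0 : ℝ)..1, F (1 - t) := by
          simp [intervalIntegral.integral_comp_sub_left F 1]
      _ = ∫ t in (0 : ℝ)..1, -conj (F t) :=
          intervalIntegral.integral_congr_Ioo_of_le zero_le_one hF
      _ = -conj (∫ t in (0 : ℝ)..1, F t) := by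
          rw [intervalIntegral.integral_neg, intervalIntegral.intervalIntegral_conj]
  have := congrArg re hanti
  rw [neg_re, conj_re] at this
  linarith

lemma re_intervalIntegral_comp_mul_deriv_eq_zero {R : ℂ → ℂ}
    (hR : ∀ z, R (conj z) = conj (R z))
    (hd : ∀ t ∈ Set.Icc (0 : ℝ) 1, HasDerivAt γ (γ' t) t)
    (hsym : ∀ t ∈ Set.Icc (0 : ℝ) 1, γ (1 - t) = conj (γ t)) :
    (∫ t in (0 : ℝ)..1, R (γ t) * γ' t).re = 0 :=
  re_intervalIntegral_eq_zero_of_comp_one_sub fun t ht => by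
    rw [hsym t ⟨ht.1.le, ht.2.le⟩, neg_conj_deriv_of_comp_one_sub_eq_conj hd hsym ht, hR,
      map_mul]
    ring

end ConjSymmetricPath

lemma im_one_div_ofReal_mul_I_mul_eq_zero (r : ℝ) {w : ℂ} (hw : w.re = 0) :
    (1 / ((r : ℂ) * I) * w).im = 0 := by
  simp [mul_im, mul_re, hw]

/-- With `b, c > 0`, `a = √(b/c)`, `f(z) = √(a+i)·(i/(z+c) − a/(z−b))` and
`ḡ(z) = conj (g (conj z)) = √(a+i)·(−iac/z + 1)`:
(i) `f(z)·ḡ(z) = −(a²+1)·(z² + bc)/(z(z+c)(z−b))`, a rational function with real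
coefficients; (ii) consequently, for every C¹ path `γ : [0,1] → ℂ∖{0, b, −c}` with
`γ(1−t) = conj (γ t)`, the number `(1/(2πi)) ∫₀¹ f(γ t)·ḡ(γ t)·γ'(t) dt` is real. -/
theorem stmt13 (b c : ℝ) (hb : 0 < b) (hc : 0 < c) (a : ℝ) (ha : a = Real.sqrt (b / c))
    (f gbar : ℂ → ℂ)
    (hf : ∀ z : ℂ, f z = ((a : ℂ) + I) ^ ((1 : ℂ) / 2) * (I / (z + (c : ℂ)) - (a : ℂ) / (z - (b : ℂ))))
    (hgbar : ∀ z : ℂ, gbar z = ((a : ℂ) + I) ^ ((1 : ℂ) / 2) * (-(I * (a : ℂ) * (c : ℂ) / z) + 1)) :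
    (∀ z : ℂ, z ≠ 0 → z ≠ (b : ℂ) → z ≠ -(c : ℂ) →
      f z * gbar z
        = -((a : ℂ) ^ 2 + 1) * (z ^ 2 + (b : ℂ) * (c : ℂ)) / (z * (z + (c : ℂ)) * (z - (b : ℂ)))) ∧
    (∀ γ γ' : ℝ → ℂ,
      (∀ t ∈ Set.Icc (0 : ℝ) 1, HasDerivAt γ (γ' t) t) →
      ContinuousOn γ' (Set.Icc (0 : ℝ) 1) →
      (∀ t ∈ Set.Icc (0 : ℝ) 1, γ t ≠ 0 ∧ γ t ≠ (b : ℂ) ∧ γ t ≠ -(c : ℂ)) →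
      (∀ t ∈ Set.Icc (0 : ℝ) 1, γ (1 - t) = (starRingEnd ℂ) (γ t)) →
      ((1 / (2 * (Real.pi : ℂ) * I)) * ∫ t in (0 : ℝ)..1, f (γ t) * gbar (γ t) * γ' t).im = 0) := by
  have habc : (a : ℂ) ^ 2 * c = b := by
    have : a ^ 2 * c = b := by rw [ha, sq_sqrt (by positivity)]; field_simp
    exact_mod_cast this
  set R : ℂ → ℂ := fun z =>
    -((a : ℂ) ^ 2 + 1) * (z ^ 2 + (b : ℂ) * (c : ℂ)) / (z * (z + (c : ℂ)) * (z - (b : ℂ)))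
  have hfg : ∀ z : ℂ, z ≠ 0 → z ≠ b → z ≠ -c → f z * gbar z = R z :=
    fun z h0 hzb hzc => by
      rw [hf, hgbar, mul_mul_mul_comm, cpow_one_div_two_mul_self]
      exact add_I_mul_partialFractions_mul habc h0 (by rwa [← sub_neg_eq_add, sub_ne_zero])
        (sub_ne_zero.mpr hzb)
  refine ⟨hfg, fun γ γ' hd _ hγ hsym => ?_⟩
  have hR : ∀ z, R (conj z) = conj (R z) := fun z => by simp [R]
  have hint : (∫ t in (0 : ℝ)..1, f (γ t) * gbar (γ t) * γ' t)
      = ∫ t in (0 : ℝ)..1, R (γ t) * γ' t :=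
    intervalIntegral.integral_congr fun t ht => by
      rw [Set.uIcc_of_le zero_le_one] at ht
      obtain ⟨h0, hzb, hzc⟩ := hγ t ht
      simp only [hfg _ h0 hzb hzc]
  have him := im_one_div_ofReal_mul_I_mul_eq_zero (2 * π)
    (re_intervalIntegral_comp_mul_deriv_eq_zero hR hd hsym)
  push_cast at him
  rwa [hint]
end

section
/- For every z ∈ ℂ with z ∉ {0, b, −c}, one has f(z)·g(z) = √(a²+1)·(i−a)·(z + i√(bc))² / (z(z+c)(z−b)). -/
/-!
Since `a + i` is not on the negative real axis, the principal square roots of `a + i` and of its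
conjugate `a - i` are conjugate, so their product is `|a + i| = √(a² + 1)`. Writing `b = a²c` and
`√(bc) = ac`, what remains is an identity of rational functions in `z`.
-/

open Complex Real

theorem Complex.cpow_half_mul_conj_cpow_half {w : ℂ} (hw : w.arg ≠ π) :
    w ^ (1 / 2 : ℂ) * (starRingEnd ℂ w) ^ (1 / 2 : ℂ) = ‖w‖ := by
  have hhalf : starRingEnd ℂ (1 / 2 : ℂ) = (1 / 2 : ℂ) := by
    rw [map_div₀, map_one, map_ofNat]
  have hnorm : ‖w ^ (1 / 2 : ℂ)‖ = Real.sqrt ‖w‖ := by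
    rw [show (1 / 2 : ℂ) = ((1 / 2 : ℝ) : ℂ) by norm_num, norm_cpow_real, Real.sqrt_eq_rpow]
  rw [conj_cpow _ _ hw, hhalf, mul_conj, normSq_eq_norm_sq, hnorm,
    Real.sq_sqrt (norm_nonneg w)]

theorem Complex.ofReal_add_I_cpow_half_mul_ofReal_sub_I_cpow_half (a : ℝ) :
    ((a : ℂ) + I) ^ (1 / 2 : ℂ) * ((a : ℂ) - I) ^ (1 / 2 : ℂ) = (Real.sqrt (a ^ 2 + 1) : ℂ) := by
  have harg : ((a : ℂ) + I).arg ≠ π := fun h => by simpa using (arg_eq_pi_iff.mp h).2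
  have hconj : (a : ℂ) - I = starRingEnd ℂ ((a : ℂ) + I) := by simp [sub_eq_add_neg]
  have hnorm : ‖(a : ℂ) + I‖ = Real.sqrt (a ^ 2 + 1) := by
    simpa using norm_add_mul_I a 1
  rw [hconj, cpow_half_mul_conj_cpow_half harg, hnorm]

theorem I_div_sub_div_mul_I_mul_div_add_one {a c z : ℂ} (hz : z ≠ 0) (hzc : z + c ≠ 0)
    (hzb : z - a ^ 2 * c ≠ 0) :
    (I / (z + c) - a / (z - a ^ 2 * c)) * (I * a * c / z + 1)
      = (I - a) * (z + I * (a * c)) ^ 2 / (z * (z + c) * (z - a ^ 2 * c)) := by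
  rw [div_add_one hz, div_sub_div _ _ hzc hzb, div_mul_div_comm,
    div_eq_div_iff (by simp [hz, hzc, hzb]) (by simp [hz, hzc, hzb])]
  linear_combination (-(a * c * z) - I * a ^ 2 * c ^ 2) * (z * (z + c) * (z - a ^ 2 * c)) * I_sq

/-- With `b, c > 0`, `a = √(b/c)`, `f(z) = √(a+i)·(i/(z+c) − a/(z−b))` and
`g(z) = √(a−i)·(iac/z + 1)`, one has
`f(z)·g(z) = √(a²+1)·(i−a)·(z + i√(bc))²/(z(z+c)(z−b))` for `z ∉ {0, b, −c}`. -/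
theorem stmt14 (b c : ℝ) (hb : 0 < b) (hc : 0 < c) (a : ℝ) (ha : a = Real.sqrt (b / c))
    (f g : ℂ → ℂ)
    (hf : ∀ z : ℂ, f z = ((a : ℂ) + I) ^ ((1 : ℂ) / 2) * (I / (z + (c : ℂ)) - (a : ℂ) / (z - (b : ℂ))))
    (hg : ∀ z : ℂ, g z = ((a : ℂ) - I) ^ ((1 : ℂ) / 2) * (I * (a : ℂ) * (c : ℂ) / z + 1))
    (z : ℂ) (hz0 : z ≠ 0) (hzb : z ≠ (b : ℂ)) (hzc : z ≠ -(c : ℂ)) :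
    f z * g z
      = (Real.sqrt (a ^ 2 + 1) : ℂ) * (I - (a : ℂ)) * (z + I * (Real.sqrt (b * c) : ℂ)) ^ 2
          / (z * (z + (c : ℂ)) * (z - (b : ℂ))) := by
  have hab : b = a ^ 2 * c := by
    rw [ha, Real.sq_sqrt (by positivity), div_mul_cancel₀ b hc.ne']
  have hbc : Real.sqrt (b * c) = a * c := by
    have ha0 : 0 ≤ a := ha ▸ Real.sqrt_nonneg _
    rw [hab, show a ^ 2 * c * c = (a * c) ^ 2 by ring, Real.sqrt_sq (by positivity)]
  have hzb' : z - (a : ℂ) ^ 2 * c ≠ 0 := by exact_mod_cast sub_ne_zero.mpr (hab ▸ hzb)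
  have hzc' : z + (c : ℂ) ≠ 0 := by rwa [← sub_neg_eq_add, sub_ne_zero]
  rw [hf, hg, mul_mul_mul_comm, ofReal_add_I_cpow_half_mul_ofReal_sub_I_cpow_half, hbc, hab]
  push_cast
  rw [I_div_sub_div_mul_I_mul_div_add_one hz0 hzc' hzb']
  ring
end

section
/- Let ḡ(z) = conj(g(conj z)) = √(a+i)·(−i·a·c/z + 1). Let C be a positively oriented circle of center w₀ ∈ ℂ and radius r > 0 such that |w₀| < r, |w₀ − b| < r and |w₀ + c| > r (so that 0 and b lie inside C and −c lies outside C). Then (1/(2πi)) ∮_C f(z)g(z) dz = −2a·√(a²+1) and (1/(2πi)) ∮_C f(z)ḡ(z) dz = 0. -/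
/-!
As `a = √(b/c)`, `b = a²c`. Up to constant factors, `f·g` and `f·ḡ` are
`(i/(z+c) − a/(z−a²c))(ε·iac/z + 1)` with `ε = 1` and `ε = −1`. This rational function has
simple poles at `0`, `a²c`, `−c` with residues `ε(i − a)`, `−εi − a`, `εa + i`; the two inside `C`
add up to `−(1 + ε)a`.
The constant in front of `f·g` is `√(a+i)·√(a−i) = |a + i| = √(a² + 1)`, because the principal
square root commutes with conjugation away from the negative real axis.
-/

open Complex Real Metric ComplexConjugate

theorem circleIntegrable_const_mul_sub_inv {c w : ℂ} {R : ℝ} (hR : 0 ≤ R) (A : ℂ)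
    (hw : w ∉ sphere c R) : CircleIntegrable (fun z => A * (z - w)⁻¹) c R :=
  (circleIntegrable_sub_inv_iff.mpr (Or.inr (by rwa [abs_of_nonneg hR]))).const_mul A

namespace circleIntegral

variable {c w : ℂ} {R : ℝ}

theorem integral_sub_inv_of_notMem_closedBall (hR : 0 ≤ R) (hw : w ∉ closedBall c R) :
    (∮ z in C(c, R), (z - w)⁻¹) = 0 := by
  refine DiffContOnCl.circleIntegral_eq_zero hR ?_
  refine (differentiableOn_id.sub_const w |>.inv fun z hz => sub_ne_zero.2 ?_).diffContOnCl_ball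
    subset_rfl
  rintro rfl
  exact hw hz

theorem integral_three_simple_poles (hR : 0 ≤ R) {p q s : ℂ} (A B C : ℂ) (hp : p ∈ ball c R)
    (hq : q ∈ ball c R) (hs : s ∉ closedBall c R) :
    (∮ z in C(c, R), A * (z - p)⁻¹ + (B * (z - q)⁻¹ + C * (z - s)⁻¹)) =
      2 * π * I * (A + B) := by
  have off_sphere : ∀ w ∈ ball c R, w ∉ sphere c R := fun w hw hw' =>
    (mem_sphere.1 hw').not_lt (mem_ball.1 hw)
  have hA := circleIntegrable_const_mul_sub_inv hR A (off_sphere p hp)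
  have hB := circleIntegrable_const_mul_sub_inv hR B (off_sphere q hq)
  have hC := circleIntegrable_const_mul_sub_inv hR C fun h => hs (sphere_subset_closedBall h)
  rw [integral_add (g := fun z => B * (z - q)⁻¹ + C * (z - s)⁻¹) hA (hB.add hC),
    integral_add hB hC,
    integral_const_mul, integral_const_mul, integral_const_mul, integral_sub_inv_of_mem_ball hp,
    integral_sub_inv_of_mem_ball hq, integral_sub_inv_of_notMem_closedBall hR hs]
  ring

end circleIntegral

theorem cpow_one_half_mul_conj_cpow_one_half {w : ℂ} (hw : w.arg ≠ π) :
    w ^ (1 / 2 : ℂ) * conj w ^ (1 / 2 : ℂ) = ‖w‖ := by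
  have hconj : conj (1 / 2 : ℂ) = 1 / 2 := by simp [map_ofNat]
  rw [conj_cpow w _ hw, hconj, mul_conj', ← ofReal_pow, ← norm_pow, one_div, cpow_ofNat_inv_pow]

theorem div_sub_div_mul_eq_partial_fractions (a c ε z : ℂ) (hz₀ : z ≠ 0) (hzb : z ≠ a ^ 2 * c)
    (hzc : z ≠ -c) :
    (I / (z + c) - a / (z - a ^ 2 * c)) * (ε * I * a * c / z + 1) =
      ε * (I - a) * (z - 0)⁻¹ +
        ((-(ε * I) - a) * (z - a ^ 2 * c)⁻¹ + (ε * a + I) * (z - -c)⁻¹) := by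
  have h1 : z + c ≠ 0 := by intro h; apply hzc; linear_combination h
  have h2 : z - c * a ^ 2 ≠ 0 := sub_ne_zero.2 (by rwa [mul_comm])
  rw [sub_neg_eq_add, sub_zero]
  field_simp
  linear_combination (c * a * ε * (z - a ^ 2 * c)) * I_sq

theorem circleIntegral_div_sub_div_mul {a c ε w₀ : ℂ} {r : ℝ} (hr : 0 ≤ r) (h0 : 0 ∈ ball w₀ r)
    (hb : a ^ 2 * c ∈ ball w₀ r) (hc : -c ∉ closedBall w₀ r) :
    (∮ z in C(w₀, r), (I / (z + c) - a / (z - a ^ 2 * c)) * (ε * I * a * c / z + 1)) =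
      2 * π * I * (-(1 + ε) * a) := by
  have ne_of_mem_sphere : ∀ z ∈ sphere w₀ r, ∀ p ∈ ball w₀ r, z ≠ p := fun z hz p hp h =>
    (mem_sphere.1 hz).not_lt (h ▸ mem_ball.1 hp)
  rw [circleIntegral.integral_congr hr fun z hz => div_sub_div_mul_eq_partial_fractions a c ε z
      (ne_of_mem_sphere z hz 0 h0) (ne_of_mem_sphere z hz _ hb)
      fun h => hc (h ▸ sphere_subset_closedBall hz),
    circleIntegral.integral_three_simple_poles hr _ _ _ h0 hb hc]
  ring

theorem ofReal_add_I_cpow_one_half_mul_sub_I_cpow_one_half (a : ℝ) :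
    ((a : ℂ) + I) ^ (1 / 2 : ℂ) * ((a : ℂ) - I) ^ (1 / 2 : ℂ) = (√(a ^ 2 + 1) : ℝ) := by
  have harg : ((a : ℂ) + I).arg ≠ π := fun h => by simpa using (arg_eq_pi_iff.1 h).2
  have hnorm : ‖(a : ℂ) + I‖ = √(a ^ 2 + 1) := by simpa using norm_add_mul_I a 1
  have hconj : conj ((a : ℂ) + I) = a - I := by simp [sub_eq_add_neg]
  rw [← hnorm, ← cpow_one_half_mul_conj_cpow_one_half harg, hconj]

/-- With `b, c > 0`, `a = √(b/c)`, `f(z) = √(a+i)·(i/(z+c) − a/(z−b))`,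
`g(z) = √(a−i)·(iac/z + 1)` and `ḡ(z) = conj (g (conj z)) = √(a+i)·(−iac/z + 1)`:
for any positively oriented circle of center `w₀` and radius `r` containing `0` and `b`
inside and `−c` outside, `(1/(2πi)) ∮ f·g = −2a√(a²+1)` and `(1/(2πi)) ∮ f·ḡ = 0`. -/
theorem stmt15 (b c : ℝ) (hb : 0 < b) (hc : 0 < c) (a : ℝ) (ha : a = Real.sqrt (b / c))
    (f g gbar : ℂ → ℂ)
    (hf : ∀ z : ℂ, f z = ((a : ℂ) + I) ^ ((1 : ℂ) / 2) * (I / (z + (c : ℂ)) - (a : ℂ) / (z - (b : ℂ))))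
    (hg : ∀ z : ℂ, g z = ((a : ℂ) - I) ^ ((1 : ℂ) / 2) * (I * (a : ℂ) * (c : ℂ) / z + 1))
    (hgbar : ∀ z : ℂ, gbar z = ((a : ℂ) + I) ^ ((1 : ℂ) / 2) * (-(I * (a : ℂ) * (c : ℂ) / z) + 1))
    (w₀ : ℂ) (r : ℝ) (hr : 0 < r)
    (h0 : ‖w₀‖ < r) (hb' : ‖w₀ - (b : ℂ)‖ < r)
    (hc' : r < ‖w₀ + (c : ℂ)‖) :
    (1 / (2 * (Real.pi : ℂ) * I)) * (∮ z in C(w₀, r), f z * g z)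
        = -2 * (a : ℂ) * (Real.sqrt (a ^ 2 + 1) : ℂ) ∧
    (1 / (2 * (Real.pi : ℂ) * I)) * (∮ z in C(w₀, r), f z * gbar z) = 0 := by
  have hac : (a : ℂ) ^ 2 * c = b := by
    rw [ha, ← ofReal_pow, sq_sqrt (div_nonneg hb.le hc.le), ← ofReal_mul, div_mul_cancel₀ _ hc.ne']
  have hmem₀ : (0 : ℂ) ∈ ball w₀ r := mem_ball'.2 (by rwa [Complex.dist_eq, sub_zero])
  have hmem_b : (a : ℂ) ^ 2 * c ∈ ball w₀ r := mem_ball'.2 (by rwa [hac, Complex.dist_eq])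
  have hnotMem_c : -(c : ℂ) ∉ closedBall w₀ r := by
    rwa [mem_closedBall', Complex.dist_eq, sub_neg_eq_add, not_le]
  have h2πI : 2 * (π : ℂ) * I ≠ 0 := by simp [pi_ne_zero]
  set S := ((a : ℂ) + I) ^ ((1 : ℂ) / 2)
  have hfg : (fun z => f z * g z) = fun z => S * ((a : ℂ) - I) ^ ((1 : ℂ) / 2) *
      ((I / (z + c) - a / (z - a ^ 2 * c)) * (1 * I * a * c / z + 1)) := by
    funext z; rw [hf, hg, hac]; ring
  have hfgbar : (fun z => f z * gbar z) = fun z => S * S *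
      ((I / (z + c) - a / (z - a ^ 2 * c)) * (-1 * I * a * c / z + 1)) := by
    funext z; rw [hf, hgbar, hac]; ring
  constructor
  · rw [hfg, circleIntegral.integral_const_mul,
      ofReal_add_I_cpow_one_half_mul_sub_I_cpow_one_half,
      circleIntegral_div_sub_div_mul hr.le hmem₀ hmem_b hnotMem_c]
    field_simp
    ring
  · rw [hfgbar, circleIntegral.integral_const_mul,
      circleIntegral_div_sub_div_mul hr.le hmem₀ hmem_b hnotMem_c]
    ring
end

section
/- For every real a > 0, with all square roots taken as principal branches of the complex square root: (i) √(−a−i) = −i·√(a+i); (ii) √(−a+i) = i·√(a−i); (iii) √(a+i)·√(a−i) = √(a²+1); and (iv) (−a·√(−a−i) + √(a+i)) · (−a·√(−a+i) + √(a−i)) = (a²+1)^{3/2}, which is a positive real number. -/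
/-!
The principal square root of `w` is the unique square root with positive real part (when one
exists). For `w` off the real axis, `∓ i √w` squares to `-w` and has real part `± Im √w > 0`,
which gives (i) and (ii). Since `a - i` is the conjugate of `a + i`, the product in (iii) is
`|√(a+i)|² = |a+i|`, and (iv) reduces by (i)–(iii) to `√(a²+1) · (1+ai)(1-ai)`.
-/

open Complex

namespace Complex

open ComplexConjugate

lemma cpow_inv_two_eq_of_sq {z w : ℂ} (h : z ^ 2 = w) (hz : 0 < z.re) : w ^ (2⁻¹ : ℂ) = z :=
  h ▸ sq_cpow_two_inv hz

lemma im_cpow_inv_two_pos {w : ℂ} (hw : 0 < w.im) : 0 < (w ^ (2⁻¹ : ℂ)).im := by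
  rw [cpow_inv_two_im_eq_sqrt hw.le, Real.sqrt_pos]
  linarith [le_abs_self w.re, abs_re_lt_norm.2 hw.ne']

lemma im_cpow_inv_two_neg {w : ℂ} (hw : w.im < 0) : (w ^ (2⁻¹ : ℂ)).im < 0 := by
  rw [cpow_inv_two_im_eq_neg_sqrt hw, neg_neg_iff_pos, Real.sqrt_pos]
  linarith [le_abs_self w.re, abs_re_lt_norm.2 hw.ne]

lemma neg_cpow_inv_two_of_im_pos {w : ℂ} (hw : 0 < w.im) :
    (-w) ^ (2⁻¹ : ℂ) = -I * w ^ (2⁻¹ : ℂ) := by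
  refine cpow_inv_two_eq_of_sq ?_ ?_
  · rw [mul_pow, cpow_ofNat_inv_pow, neg_sq, I_sq, neg_one_mul]
  · simpa using im_cpow_inv_two_pos hw

lemma neg_cpow_inv_two_of_im_neg {w : ℂ} (hw : w.im < 0) :
    (-w) ^ (2⁻¹ : ℂ) = I * w ^ (2⁻¹ : ℂ) := by
  refine cpow_inv_two_eq_of_sq ?_ ?_
  · rw [mul_pow, cpow_ofNat_inv_pow, I_sq, neg_one_mul]
  · simpa using im_cpow_inv_two_neg hw

lemma cpow_inv_two_mul_conj_cpow_inv_two {w : ℂ} (hw : w.arg ≠ Real.pi) :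
    w ^ (2⁻¹ : ℂ) * conj w ^ (2⁻¹ : ℂ) = ‖w‖ := by
  rw [conj_cpow w _ hw, map_inv₀, map_ofNat, mul_conj', ← ofReal_pow, ← norm_pow,
    cpow_ofNat_inv_pow]

end Complex

lemma Real.rpow_three_halves {x : ℝ} (hx : 0 ≤ x) : x ^ (3 / 2 : ℝ) = x * √x := by
  rw [show (3 / 2 : ℝ) = 1 + 1 / 2 by norm_num, Real.rpow_add' hx (by norm_num), Real.rpow_one,
    Real.sqrt_eq_rpow]

theorem stmt16_general (a : ℝ) :
    (-(a : ℂ) - I) ^ ((1 : ℂ) / 2) = -I * (((a : ℂ) + I) ^ ((1 : ℂ) / 2)) ∧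
    (-(a : ℂ) + I) ^ ((1 : ℂ) / 2) = I * (((a : ℂ) - I) ^ ((1 : ℂ) / 2)) ∧
    ((a : ℂ) + I) ^ ((1 : ℂ) / 2) * ((a : ℂ) - I) ^ ((1 : ℂ) / 2)
        = (Real.sqrt (a ^ 2 + 1) : ℂ) ∧
    (-(a : ℂ) * (-(a : ℂ) - I) ^ ((1 : ℂ) / 2) + ((a : ℂ) + I) ^ ((1 : ℂ) / 2))
        * (-(a : ℂ) * (-(a : ℂ) + I) ^ ((1 : ℂ) / 2) + ((a : ℂ) - I) ^ ((1 : ℂ) / 2))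
        = (((a ^ 2 + 1) ^ ((3 : ℝ) / 2) : ℝ) : ℂ) ∧
    0 < (a ^ 2 + 1) ^ ((3 : ℝ) / 2) := by
  simp only [one_div]
  have h_prod : ((a : ℂ) + I) ^ (2⁻¹ : ℂ) * ((a : ℂ) - I) ^ (2⁻¹ : ℂ) = √(a ^ 2 + 1) := by
    have h_conj : (starRingEnd ℂ) ((a : ℂ) + I) = a - I := by simp [sub_eq_add_neg]
    rw [← h_conj, cpow_inv_two_mul_conj_cpow_inv_two (by simp [arg_eq_pi_iff]),
      show (a : ℂ) + I = a + (1 : ℝ) * I by simp, norm_add_mul_I, one_pow]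
  set u := ((a : ℂ) + I) ^ (2⁻¹ : ℂ)
  set v := ((a : ℂ) - I) ^ (2⁻¹ : ℂ)
  have h_neg_add : (-(a : ℂ) - I) ^ (2⁻¹ : ℂ) = -I * u := by
    rw [← neg_add', neg_cpow_inv_two_of_im_pos (by simp)]
  have h_neg_sub : (-(a : ℂ) + I) ^ (2⁻¹ : ℂ) = I * v := by
    rw [show -(a : ℂ) + I = -(a - I) by ring, neg_cpow_inv_two_of_im_neg (by simp)]
  refine ⟨h_neg_add, h_neg_sub, h_prod, ?_, by positivity⟩
  rw [h_neg_add, h_neg_sub, Real.rpow_three_halves (by positivity)]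
  push_cast
  linear_combination (1 + (a : ℂ) ^ 2) * h_prod - (a : ℂ) ^ 2 * u * v * I_sq

/-- Principal-branch square-root identities for real `a > 0`:
(i) `√(−a−i) = −i√(a+i)`; (ii) `√(−a+i) = i√(a−i)`; (iii) `√(a+i)·√(a−i) = √(a²+1)`;
(iv) `(−a√(−a−i) + √(a+i))·(−a√(−a+i) + √(a−i)) = (a²+1)^{3/2}`, a positive real. -/
theorem stmt16 (a : ℝ) (ha : 0 < a) :
    (-(a : ℂ) - I) ^ ((1 : ℂ) / 2) = -I * (((a : ℂ) + I) ^ ((1 : ℂ) / 2)) ∧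
    (-(a : ℂ) + I) ^ ((1 : ℂ) / 2) = I * (((a : ℂ) - I) ^ ((1 : ℂ) / 2)) ∧
    ((a : ℂ) + I) ^ ((1 : ℂ) / 2) * ((a : ℂ) - I) ^ ((1 : ℂ) / 2)
        = (Real.sqrt (a ^ 2 + 1) : ℂ) ∧
    (-(a : ℂ) * (-(a : ℂ) - I) ^ ((1 : ℂ) / 2) + ((a : ℂ) + I) ^ ((1 : ℂ) / 2))
        * (-(a : ℂ) * (-(a : ℂ) + I) ^ ((1 : ℂ) / 2) + ((a : ℂ) - I) ^ ((1 : ℂ) / 2))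
        = (((a ^ 2 + 1) ^ ((3 : ℝ) / 2) : ℝ) : ℂ) ∧
    0 < (a ^ 2 + 1) ^ ((3 : ℝ) / 2) :=
  stmt16_general a
end

section
/- Let α > 0 and β > 0 be real numbers and define, for z ∈ ℂ with z ≠ 0 and z ≠ 1, the 2×2 complex matrices A(z) = [[1, α⁻¹z⁻¹],[α, 1]] and B(z) = (1−z⁻¹)⁻¹·[[1, β⁻¹z⁻¹],[β, 1]]. Then for all z₁, z₂ ∈ ℂ∖{0, 1}: B(z₂)·B(z₁)⁻¹ − A(z₂)⁻¹·A(z₁) = ((z₁−z₂)/(z₁z₂)) · ((α⁻¹+β⁻¹)/(1−z₂⁻¹)) · [[0,1],[0,0]]. -/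
/-!
Writing `w = z⁻¹`, `A(z) = T α w` and `B(z) = (1 - w)⁻¹ • T β w` with `T c w = !![1, c⁻¹ w; c, 1]`.
Since `det (T c w) = 1 - w`, the adjugate formula gives `(T c w)⁻¹ = (1 - w)⁻¹ • T (-c) w`, so both
`B(z₂) B(z₁)⁻¹` and `A(z₂)⁻¹ A(z₁)` are `(1 - w₂)⁻¹` times a product `T c w₂ * T (-c) w₁`
(with `c = β`, resp. `c = -α`). Such a product is upper triangular with diagonal `(1 - w₂, 1 - w₁)`
independent of `c`, and its corner entry is `c⁻¹ (w₂ - w₁)`, so only the corner survives in the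
difference.
-/

open Matrix

variable {K : Type*} [Field K]

def transferMatrix (c w : K) : Matrix (Fin 2) (Fin 2) K :=
  !![1, c⁻¹ * w; c, 1]

theorem det_transferMatrix {c : K} (hc : c ≠ 0) (w : K) : (transferMatrix c w).det = 1 - w := by
  rw [transferMatrix, det_fin_two_of]
  field_simp

-- At `w = 1` both sides are `0`, by the junk conventions for `Matrix.inv` and `0⁻¹`.
theorem inv_transferMatrix {c : K} (hc : c ≠ 0) (w : K) :
    (transferMatrix c w)⁻¹ = (1 - w)⁻¹ • transferMatrix (-c) w := by
  rw [inv_def, det_transferMatrix hc, Ring.inverse_eq_inv', transferMatrix, transferMatrix,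
    adjugate_fin_two_of, inv_neg, neg_mul]

theorem inv_smul_transferMatrix {c w : K} (hc : c ≠ 0) (hw : 1 - w ≠ 0) :
    ((1 - w)⁻¹ • transferMatrix c w)⁻¹ = transferMatrix (-c) w := by
  have h := inv_smul' (A := transferMatrix c w) (Units.mk0 _ (inv_ne_zero hw))
    (by rw [det_transferMatrix hc]; exact hw.isUnit)
  rw [Units.smul_def, Units.val_mk0, Units.smul_def, Units.val_inv_eq_inv_val, Units.val_mk0,
    inv_inv] at h
  rw [h, inv_transferMatrix hc, smul_smul, mul_inv_cancel₀ hw, one_smul]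

theorem transferMatrix_mul_transferMatrix_neg {c : K} (hc : c ≠ 0) (w w' : K) :
    transferMatrix c w * transferMatrix (-c) w' = !![1 - w, c⁻¹ * (w - w'); 0, 1 - w'] := by
  ext i j
  fin_cases i <;> fin_cases j <;> simp [transferMatrix] <;> field_simp <;> ring

theorem transferMatrix_mul_sub_transferMatrix_mul {b c : K} (hb : b ≠ 0) (hc : c ≠ 0) (w w' : K) :
    transferMatrix b w * transferMatrix (-b) w' - transferMatrix (-c) w * transferMatrix c w'
      = ((b⁻¹ + c⁻¹) * (w - w')) • !![0, 1; 0, 0] := by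
  have h := transferMatrix_mul_transferMatrix_neg (neg_ne_zero.mpr hc) w w'
  rw [neg_neg] at h
  rw [transferMatrix_mul_transferMatrix_neg hb, h]
  ext i j
  fin_cases i <;> fin_cases j <;> simp
  ring

theorem stmt17_general (α β : ℝ) (hα : 0 < α) (hβ : 0 < β)
    (A B : ℂ → Matrix (Fin 2) (Fin 2) ℂ)
    (hA : ∀ z : ℂ, A z = !![1, (α : ℂ)⁻¹ * z⁻¹; (α : ℂ), 1])
    (hB : ∀ z : ℂ, B z = (1 - z⁻¹)⁻¹ • !![1, (β : ℂ)⁻¹ * z⁻¹; (β : ℂ), 1])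
    (z₁ z₂ : ℂ) (h₁0 : z₁ ≠ 0) (h₁1 : z₁ ≠ 1) (h₂0 : z₂ ≠ 0) :
    B z₂ * (B z₁)⁻¹ - (A z₂)⁻¹ * A z₁
      = (((z₁ - z₂) / (z₁ * z₂)) * (((α : ℂ)⁻¹ + (β : ℂ)⁻¹) / (1 - z₂⁻¹))) •
          !![0, 1; 0, 0] := by
  have hαC : (α : ℂ) ≠ 0 := by exact_mod_cast hα.ne'
  have hβC : (β : ℂ) ≠ 0 := by exact_mod_cast hβ.ne'
  have hs₁ : (1 : ℂ) - z₁⁻¹ ≠ 0 := sub_ne_zero.mpr (by simpa [eq_comm] using h₁1)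
  have hA' : ∀ z, A z = transferMatrix (α : ℂ) z⁻¹ := hA
  have hB' : ∀ z, B z = (1 - z⁻¹)⁻¹ • transferMatrix (β : ℂ) z⁻¹ := hB
  rw [hB', hB', inv_smul_transferMatrix hβC hs₁, hA', hA', inv_transferMatrix hαC, smul_mul_assoc,
    smul_mul_assoc, ← smul_sub, transferMatrix_mul_sub_transferMatrix_mul hβC hαC, smul_smul]
  congr 1
  field_simp
  ring

/-- Telescoping identity: with `A(z) = [[1, α⁻¹z⁻¹],[α, 1]]` and
`B(z) = (1−z⁻¹)⁻¹·[[1, β⁻¹z⁻¹],[β, 1]]`, for all `z₁, z₂ ∉ {0, 1}`: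
`B(z₂)B(z₁)⁻¹ − A(z₂)⁻¹A(z₁) = ((z₁−z₂)/(z₁z₂))·((α⁻¹+β⁻¹)/(1−z₂⁻¹))·[[0,1],[0,0]]`. -/
theorem stmt17 (α β : ℝ) (hα : 0 < α) (hβ : 0 < β)
    (A B : ℂ → Matrix (Fin 2) (Fin 2) ℂ)
    (hA : ∀ z : ℂ, A z = !![1, (α : ℂ)⁻¹ * z⁻¹; (α : ℂ), 1])
    (hB : ∀ z : ℂ, B z = (1 - z⁻¹)⁻¹ • !![1, (β : ℂ)⁻¹ * z⁻¹; (β : ℂ), 1])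
    (z₁ z₂ : ℂ) (h₁0 : z₁ ≠ 0) (h₁1 : z₁ ≠ 1) (h₂0 : z₂ ≠ 0) (h₂1 : z₂ ≠ 1) :
    B z₂ * (B z₁)⁻¹ - (A z₂)⁻¹ * A z₁
      = (((z₁ - z₂) / (z₁ * z₂)) * (((α : ℂ)⁻¹ + (β : ℂ)⁻¹) / (1 - z₂⁻¹))) •
          !![0, 1; 0, 0] :=
  stmt17_general α β hα hβ A B hA hB z₁ z₂ h₁0 h₁1 h₂0
end
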